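/- arXiv:2511.02789 — 3 statements merged into one kernel-verified Lean document; each statement's English description precedes it below -/
import Mathlib

section
/- For simple functions f, g on ℝ (finite linear combinations of characteristic functions of dyadic intervals), the pointwise product satisfies f(x)g(x) = π^{(0,1)}(f,g)(x) + π^{(1,0)}(f,g)(x) + π^{(1,1)}(f,g)(x) for almost every x ∈ ℝ. -/
open MeasureTheory Set
open scoped ENNReal Classical

noncomputable section

/-- The dyadic interval `[n·2^k, (n+1)·2^k)`, indexed by `p = (k, n)`. -/
def dyadicI (p : ℤ × ℤ) : Set ℝ := Set.Ico ((p.2 : ℝ) * 2 ^ p.1) ((p.2 + 1 : ℝ) * 2 ^ p.1)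

/-- The length `|I| = 2^k` of the dyadic interval indexed by `p = (k, n)`. -/
def dlen (p : ℤ × ℤ) : ℝ := (2 : ℝ) ^ p.1

/-- The `L²`-normalized Haar function of the dyadic interval indexed by `p = (k, n)`. -/
def haar (p : ℤ × ℤ) (x : ℝ) : ℝ :=
  (2 : ℝ) ^ (-(p.1 : ℝ) / 2) *
    ((dyadicI (p.1 - 1, 2 * p.2)).indicator 1 x - (dyadicI (p.1 - 1, 2 * p.2 + 1)).indicator 1 x)

/-- The normalized indicator `χ_I/|I|`. -/
def nind (p : ℤ × ℤ) (x : ℝ) : ℝ := (dlen p)⁻¹ * (dyadicI p).indicator 1 x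

/-- Index of a dyadic rectangle `R = I × J`. -/
abbrev RectIx : Type := (ℤ × ℤ) × (ℤ × ℤ)

/-- The dyadic rectangle `I × J`. -/
def dyadicR (r : RectIx) : Set (ℝ × ℝ) := (dyadicI r.1) ×ˢ (dyadicI r.2)

/-- The area `|R| = |I|·|J|`. -/
def rlen (r : RectIx) : ℝ := dlen r.1 * dlen r.2

/-- The rectangular Haar function `h_R = h_I ⊗ h_J`. -/
def haarR (r : RectIx) (z : ℝ × ℝ) : ℝ := haar r.1 z.1 * haar r.2 z.2

/-- The rectangular Haar coefficient `f_R = ⟨f, h_R⟩`. -/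
def haarCoefR (f : ℝ × ℝ → ℝ) (r : RectIx) : ℝ := ∫ z : ℝ × ℝ, f z * haarR r z

/-- The average of `g` over the dyadic rectangle `R`. -/
def avgR (g : ℝ × ℝ → ℝ) (r : RectIx) : ℝ := (rlen r)⁻¹ * ∫ z in dyadicR r, g z

/-- The average of `u` over the dyadic interval `I`. -/
def avgI (u : ℝ → ℝ) (p : ℤ × ℤ) : ℝ := (dlen p)⁻¹ * ∫ x in dyadicI p, u x

/-- The Haar coefficient in the second variable, `f_J(x) = ⟨f(x,·), h_J⟩`. -/
def coefSnd (f : ℝ × ℝ → ℝ) (q : ℤ × ℤ) (x : ℝ) : ℝ := ∫ y : ℝ, f (x, y) * haar q y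

/-- The Haar coefficient in the first variable, `f_I(y) = ⟨f(·,y), h_I⟩`. -/
def coefFst (f : ℝ × ℝ → ℝ) (p : ℤ × ℤ) (y : ℝ) : ℝ := ∫ x : ℝ, f (x, y) * haar p x

/-- The bi-parameter dyadic square function. -/
def sqR (f : ℝ × ℝ → ℝ) (z : ℝ × ℝ) : ℝ :=
  Real.sqrt (∑' r : RectIx, (haarCoefR f r) ^ 2 * (rlen r)⁻¹ * (dyadicR r).indicator 1 z)

/-- The strong dyadic maximal function. -/
def strongMax (g : ℝ × ℝ → ℝ) (z : ℝ × ℝ) : ℝ :=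
  ⨆ r : {r : RectIx // z ∈ dyadicR r}, |avgR g r.1|

/-- The one-parameter dyadic maximal function. -/
def dyadMax (u : ℝ → ℝ) (x : ℝ) : ℝ := ⨆ p : {p : ℤ × ℤ // x ∈ dyadicI p}, |avgI u p.1|

/-- `f` is a finite linear combination of indicators of dyadic intervals. -/
def IsDyadicSimple (f : ℝ → ℝ) : Prop :=
  ∃ (s : Finset (ℤ × ℤ)) (c : ℤ × ℤ → ℝ),
    f = fun x => ∑ p ∈ s, c p * (dyadicI p).indicator 1 x

/-- `g` is a finite linear combination of indicators of dyadic rectangles. -/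
def IsDyadicSimple2 (g : ℝ × ℝ → ℝ) : Prop :=
  ∃ (s : Finset RectIx) (c : RectIx → ℝ),
    g = fun z => ∑ r ∈ s, c r * (dyadicR r).indicator 1 z

/-- `f` is a finite linear combination of rectangular Haar functions. -/
def FinHaar2 (f : ℝ × ℝ → ℝ) : Prop :=
  ∃ (s : Finset RectIx) (c : RectIx → ℝ), f = fun z => ∑ r ∈ s, c r * haarR r z

/-- The paraproduct `π²_g(f) = Σ_R f_R ⟨g⟩_R h_R`. -/
def pi2 (g f : ℝ × ℝ → ℝ) (z : ℝ × ℝ) : ℝ :=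
  ∑' r : RectIx, haarCoefR f r * avgR g r * haarR r z

/-- The mixed paraproduct `π³_g(f) = Σ_{I,J} ⟨f_J⟩_I ⟨g_I⟩_J h_I ⊗ h_J`. -/
def pi3 (g f : ℝ × ℝ → ℝ) (z : ℝ × ℝ) : ℝ :=
  ∑' r : RectIx, avgI (coefSnd f r.2) r.1 * avgI (coefFst g r.1) r.2 * haarR r z

/-- The mixed paraproduct `π⁴_g(f) = Σ_{I,J} ⟨f_J⟩_I g_{I×J} h_I ⊗ χ̄_J`. -/
def pi4 (g f : ℝ × ℝ → ℝ) (z : ℝ × ℝ) : ℝ :=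
  ∑' r : RectIx, avgI (coefSnd f r.2) r.1 * haarCoefR g r * haar r.1 z.1 * nind r.2 z.2

/-- The mixed square-maximal operator `S₂M₁`. -/
def S2M1 (f : ℝ × ℝ → ℝ) (z : ℝ × ℝ) : ℝ :=
  Real.sqrt (∑' q : ℤ × ℤ,
    (dyadMax (coefSnd f q) z.1) ^ 2 * (dlen q)⁻¹ * (dyadicI q).indicator 1 z.2)

/-- The mixed maximal-square operator `M₂S₁`. -/
def M2S1 (g : ℝ × ℝ → ℝ) (z : ℝ × ℝ) : ℝ :=
  ⨆ q : {q : ℤ × ℤ // z.2 ∈ dyadicI q},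
    Real.sqrt (∑' p : ℤ × ℤ,
      (avgI (coefFst g p) q.1) ^ 2 * (dlen p)⁻¹ * (dyadicI p).indicator 1 z.1)

/-- The mixed maximal-square operator `M₁S₂`. -/
def M1S2 (f : ℝ × ℝ → ℝ) (z : ℝ × ℝ) : ℝ :=
  ⨆ p : {p : ℤ × ℤ // z.1 ∈ dyadicI p},
    Real.sqrt (∑' q : ℤ × ℤ,
      (avgI (coefSnd f q) p.1) ^ 2 * (dlen q)⁻¹ * (dyadicI q).indicator 1 z.2)

/-- The `H^p_d(ℝ⊗ℝ)` quasi-norm `‖M(f)‖_{L^p}`. -/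
def hpNorm (p : ℝ) (f : ℝ × ℝ → ℝ) : ℝ≥0∞ :=
  eLpNorm (strongMax f) (ENNReal.ofReal p) volume

/-! Write `E_k u(x) = dyadicAvg u k x` for the average of `u` over the dyadic interval of length
`2^k` containing `x`, and `Δ_k u = E_{k-1} u - E_k u`. At a point `x` only the intervals containing
`x` contribute, one per scale, and since `⟨u, h_I⟩ h_I(x) = Δ_k u(x)` and `h_I(x)² = χ̄_I(x)`, the
three paraproducts have `k`-th terms `E_k f Δ_k g`, `Δ_k f E_k g` and `Δ_k f Δ_k g`. These add up to
`E_{k-1} f E_{k-1} g - E_k f E_k g`, which telescopes to `f(x) g(x)`: half-open dyadic intervals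
are nested, so a simple function is constant on all small enough dyadic intervals around `x`, and
`|E_k u| ≤ 2^{-k} ‖u‖₁` kills the coarse end. In particular the identity holds at every point. -/

open Filter Topology

lemma tendsto_inv_two_zpow_atTop : Tendsto (fun k : ℤ => ((2 : ℝ) ^ k)⁻¹) atTop (𝓝 0) := by
  rw [← Nat.map_cast_int_atTop, tendsto_map'_iff]
  exact (tendsto_inv_atTop_zero.comp (tendsto_pow_atTop_atTop_of_one_lt one_lt_two)).congr
    fun n => by simp

lemma summable_of_eventually_zero_of_abs_le {F : ℤ → ℝ} {C r : ℝ} (hr : 1 < r)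
    (h0 : ∀ᶠ k in atBot, F k = 0) (hb : ∀ k, |F k| ≤ C * (r ^ k)⁻¹) : Summable F := by
  obtain ⟨k₀, hk₀⟩ := eventually_atBot.1 h0
  refine Summable.of_nat_of_neg ?_ ?_
  · refine Summable.of_norm_bounded
      ((summable_geometric_of_lt_one (by positivity) (inv_lt_one_of_one_lt₀ hr)).mul_left C)
      fun n => ?_
    simpa [Real.norm_eq_abs, inv_pow] using hb n
  · refine summable_of_ne_finset_zero (s := Finset.range (-k₀).toNat) fun n hn => hk₀ _ ?_
    simp only [Finset.mem_range, not_lt] at hn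
    omega

lemma summable_mul_of_abs_le {u v : ℤ → ℝ} {Cu Cv : ℝ} (h0 : ∀ᶠ k in atBot, u k * v k = 0)
    (hu : ∀ k, |u k| ≤ Cu * ((2 : ℝ) ^ k)⁻¹) (hv : ∀ k, |v k| ≤ Cv * ((2 : ℝ) ^ k)⁻¹) :
    Summable fun k => u k * v k := by
  refine summable_of_eventually_zero_of_abs_le (C := Cu * Cv) (r := 4) (by norm_num) h0 fun k => ?_
  calc |u k * v k| ≤ Cu * ((2 : ℝ) ^ k)⁻¹ * (Cv * ((2 : ℝ) ^ k)⁻¹) := by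
        rw [abs_mul]; exact mul_le_mul (hu k) (hv k) (abs_nonneg _) ((abs_nonneg _).trans (hu k))
    _ = Cu * Cv * ((4 : ℝ) ^ k)⁻¹ := by
        rw [show (4 : ℝ) = 2 * 2 by norm_num, mul_zpow]; ring

lemma abs_sub_pred_le {b : ℤ → ℝ} {C : ℝ} (hb : ∀ k, |b k| ≤ C * ((2 : ℝ) ^ k)⁻¹) (k : ℤ) :
    |b (k - 1) - b k| ≤ 3 * C * ((2 : ℝ) ^ k)⁻¹ := by
  have hpred : ((2 : ℝ) ^ (k - 1))⁻¹ = 2 * ((2 : ℝ) ^ k)⁻¹ := by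
    rw [zpow_sub_one₀ two_ne_zero, mul_inv, inv_inv, mul_comm]
  have := hb (k - 1)
  rw [hpred] at this
  linarith [abs_sub (b (k - 1)) (b k), hb k]

lemma tsum_sub_pred_eq {A : ℤ → ℝ} {L : ℝ} (hsum : Summable fun k => A (k - 1) - A k)
    (hconst : ∀ᶠ k in atBot, A k = L) (hlim : Tendsto A atTop (𝓝 0)) :
    ∑' k, (A (k - 1) - A k) = L := by
  obtain ⟨k₀, hk₀⟩ := eventually_atBot.1 hconst
  set ι : ℕ → ℤ := fun n => k₀ + 1 + n
  have hι : Function.Injective ι := fun m n h => by simp only [ι] at h; omega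
  have hsupp : Function.support (fun k => A (k - 1) - A k) ⊆ Set.range ι := by
    intro k hk
    by_contra hr
    have hle : k ≤ k₀ := by
      by_contra hgt
      exact hr ⟨(k - k₀ - 1).toNat, by simp only [ι]; omega⟩
    exact hk (by simp only [hk₀ k hle, hk₀ (k - 1) (by omega), sub_self])
  have hpartial : ∀ n, ∑ i ∈ Finset.range n, (A (ι i - 1) - A (ι i)) = L - A (k₀ + n) := by
    intro n
    have hshift : ∀ i : ℕ, A (ι i - 1) - A (ι i) = A (k₀ + i) - A (k₀ + (i + 1 : ℕ)) := by
      intro i; simp only [ι]; congr 2 <;> push_cast <;> ring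
    simp only [hshift, Finset.sum_range_sub' (fun i : ℕ => A (k₀ + i)), Nat.cast_zero, add_zero,
      hk₀ k₀ le_rfl]
  rw [← hι.tsum_eq hsupp]
  refine tendsto_nhds_unique (hsum.comp_injective hι).hasSum.tendsto_sum_nat ?_
  simp only [Function.comp_apply, hpartial]
  simpa using tendsto_const_nhds.sub
    (hlim.comp (tendsto_atTop_add_const_left _ k₀ tendsto_natCast_atTop_atTop))

theorem tsum_product_rule_telescope {a b : ℤ → ℝ} {a₀ b₀ Ca Cb : ℝ}
    (ha₀ : ∀ᶠ k in atBot, a k = a₀) (hb₀ : ∀ᶠ k in atBot, b k = b₀)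
    (ha : ∀ k, |a k| ≤ Ca * ((2 : ℝ) ^ k)⁻¹) (hb : ∀ k, |b k| ≤ Cb * ((2 : ℝ) ^ k)⁻¹) :
    ∑' k, a k * (b (k - 1) - b k) + ∑' k, (a (k - 1) - a k) * b k
      + ∑' k, (a (k - 1) - a k) * (b (k - 1) - b k) = a₀ * b₀ := by
  obtain ⟨ka, hka⟩ := eventually_atBot.1 ha₀
  obtain ⟨kb, hkb⟩ := eventually_atBot.1 hb₀
  have hda : ∀ᶠ k in atBot, a (k - 1) - a k = 0 :=
    eventually_atBot.2 ⟨ka, fun k hk => by rw [hka k hk, hka (k - 1) (by omega), sub_self]⟩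
  have hdb : ∀ᶠ k in atBot, b (k - 1) - b k = 0 :=
    eventually_atBot.2 ⟨kb, fun k hk => by rw [hkb k hk, hkb (k - 1) (by omega), sub_self]⟩
  have hs₁ := summable_mul_of_abs_le (hdb.mono fun k h => by rw [h, mul_zero]) ha
    (abs_sub_pred_le hb)
  have hs₂ := summable_mul_of_abs_le (hda.mono fun k h => by rw [h, zero_mul])
    (abs_sub_pred_le ha) hb
  have hs₃ := summable_mul_of_abs_le (hda.mono fun k h => by rw [h, zero_mul])
    (abs_sub_pred_le ha) (abs_sub_pred_le hb)
  have hdecay : ∀ {c : ℤ → ℝ} {C : ℝ}, (∀ k, |c k| ≤ C * ((2 : ℝ) ^ k)⁻¹) →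
      Tendsto c atTop (𝓝 0) := fun hc =>
    squeeze_zero_norm hc (by simpa using tendsto_inv_two_zpow_atTop.const_mul _)
  rw [← hs₁.tsum_add hs₂, ← (hs₁.add hs₂).tsum_add hs₃]
  have hsplit : ∀ k, a k * (b (k - 1) - b k) + (a (k - 1) - a k) * b k
      + (a (k - 1) - a k) * (b (k - 1) - b k) = a (k - 1) * b (k - 1) - a k * b k :=
    fun k => by ring
  simp only [hsplit]
  refine tsum_sub_pred_eq (A := fun k => a k * b k) ?_
    (ha₀.and hb₀ |>.mono fun k h => by rw [h.1, h.2]) ?_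
  · simpa only [hsplit] using (hs₁.add hs₂).add hs₃
  · simpa using (hdecay ha).mul (hdecay hb)

lemma mem_dyadicI_iff {x : ℝ} {k n : ℤ} : x ∈ dyadicI (k, n) ↔ ⌊x / 2 ^ k⌋ = n := by
  have h : (0 : ℝ) < 2 ^ k := by positivity
  rw [dyadicI, mem_Ico, Int.floor_eq_iff, le_div_iff₀ h, div_lt_iff₀ h]

lemma measurableSet_dyadicI (p : ℤ × ℤ) : MeasurableSet (dyadicI p) := measurableSet_Ico

lemma volume_dyadicI (p : ℤ × ℤ) : volume (dyadicI p) = ENNReal.ofReal (dlen p) := by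
  rw [dyadicI, Real.volume_Ico, dlen]
  ring_nf

lemma dlen_pos (p : ℤ × ℤ) : 0 < dlen p := zpow_pos two_pos _

lemma floor_div_two_zpow_add (x : ℝ) (k : ℤ) (n : ℕ) :
    ⌊x / 2 ^ (k + n)⌋ = ⌊x / 2 ^ k⌋ / 2 ^ n := by
  rw [zpow_add₀ two_ne_zero, ← div_div, zpow_natCast, ← Nat.cast_ofNat, ← Nat.cast_pow,
    Int.floor_div_natCast]
  push_cast
  rfl

lemma floor_div_two_zpow_congr {x y : ℝ} {k j : ℤ} (hkj : k ≤ j)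
    (h : ⌊y / 2 ^ k⌋ = ⌊x / 2 ^ k⌋) : ⌊y / 2 ^ j⌋ = ⌊x / 2 ^ j⌋ := by
  obtain ⟨n, rfl⟩ := Int.le.dest hkj
  rw [floor_div_two_zpow_add, floor_div_two_zpow_add, h]

lemma dyadicI_eq_union (k n : ℤ) :
    dyadicI (k, n) = dyadicI (k - 1, 2 * n) ∪ dyadicI (k - 1, 2 * n + 1) := by
  have hk : ∀ x : ℝ, ⌊x / 2 ^ k⌋ = ⌊x / 2 ^ (k - 1)⌋ / 2 := fun x => by
    simpa using floor_div_two_zpow_add x (k - 1) 1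
  ext x
  simp only [mem_union, mem_dyadicI_iff, hk]
  omega

lemma disjoint_dyadicI_children (k n : ℤ) :
    Disjoint (dyadicI (k - 1, 2 * n)) (dyadicI (k - 1, 2 * n + 1)) :=
  Set.disjoint_left.2 fun x h₁ h₂ => by
    rw [mem_dyadicI_iff] at h₁ h₂
    omega

def dyadicIdx (k : ℤ) (x : ℝ) : ℤ × ℤ := (k, ⌊x / 2 ^ k⌋)

lemma mem_dyadicI_dyadicIdx (k : ℤ) (x : ℝ) : x ∈ dyadicI (dyadicIdx k x) :=
  mem_dyadicI_iff.2 rfl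

lemma eq_dyadicIdx_of_mem {x : ℝ} {p : ℤ × ℤ} (h : x ∈ dyadicI p) : p = dyadicIdx p.1 x :=
  Prod.ext rfl (mem_dyadicI_iff.1 h).symm

lemma tsum_eq_tsum_dyadicIdx {T : ℤ × ℤ → ℝ} (x : ℝ) (hT : ∀ p, x ∉ dyadicI p → T p = 0) :
    ∑' p, T p = ∑' k, T (dyadicIdx k x) := by
  have hinj : Function.Injective (dyadicIdx · x) := fun k l h => congrArg Prod.fst h
  refine (hinj.tsum_eq fun p hp => ⟨p.1, ?_⟩).symm
  by_contra hx
  exact hp (hT p fun hxp => hx (eq_dyadicIdx_of_mem hxp).symm)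

lemma two_rpow_neg_half_mul_self (k : ℤ) :
    (2 : ℝ) ^ (-(k : ℝ) / 2) * 2 ^ (-(k : ℝ) / 2) = ((2 : ℝ) ^ k)⁻¹ := by
  rw [← Real.rpow_add two_pos, ← Real.rpow_intCast, ← Real.rpow_neg two_pos.le]
  ring_nf

lemma haar_of_mem_left {x : ℝ} {k n : ℤ} (h : x ∈ dyadicI (k - 1, 2 * n)) :
    haar (k, n) x = 2 ^ (-(k : ℝ) / 2) := by
  simp [haar, indicator_of_mem h,
    indicator_of_notMem (Set.disjoint_left.1 (disjoint_dyadicI_children k n) h)]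

lemma haar_of_mem_right {x : ℝ} {k n : ℤ} (h : x ∈ dyadicI (k - 1, 2 * n + 1)) :
    haar (k, n) x = -2 ^ (-(k : ℝ) / 2) := by
  simp [haar, indicator_of_mem h,
    indicator_of_notMem (Set.disjoint_right.1 (disjoint_dyadicI_children k n) h)]

lemma haar_eq_zero {x : ℝ} {p : ℤ × ℤ} (h : x ∉ dyadicI p) : haar p x = 0 := by
  rw [show p = (p.1, p.2) from rfl, dyadicI_eq_union, mem_union, not_or] at h
  simp [haar, indicator_of_notMem h.1, indicator_of_notMem h.2]

lemma nind_eq_zero {x : ℝ} {p : ℤ × ℤ} (h : x ∉ dyadicI p) : nind p x = 0 := by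
  simp [nind, indicator_of_notMem h]

lemma nind_dyadicIdx_self (k : ℤ) (x : ℝ) :
    nind (dyadicIdx k x) x = haar (dyadicIdx k x) x * haar (dyadicIdx k x) x := by
  have hx := mem_dyadicI_dyadicIdx k x
  rw [nind, dlen, indicator_of_mem hx, Pi.one_apply, mul_one]
  rw [dyadicIdx, dyadicI_eq_union] at hx
  rcases hx with hx | hx
  · rw [dyadicIdx, haar_of_mem_left hx, two_rpow_neg_half_mul_self]
  · rw [dyadicIdx, haar_of_mem_right hx, neg_mul_neg, two_rpow_neg_half_mul_self]

lemma IsDyadicSimple.integrable {u : ℝ → ℝ} (hu : IsDyadicSimple u) : Integrable u := by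
  obtain ⟨s, c, rfl⟩ := hu
  refine integrable_finsetSum _ fun p _ => (Integrable.const_mul ?_ _)
  rw [integrable_indicator_iff (measurableSet_dyadicI _)]
  exact integrableOn_const (by simp [volume_dyadicI])

lemma integral_mul_nind (u : ℝ → ℝ) (p : ℤ × ℤ) : ∫ y, u y * nind p y = avgI u p := by
  have h : ∀ y, u y * nind p y = (dlen p)⁻¹ * (dyadicI p).indicator u y := fun y => by
    by_cases hy : y ∈ dyadicI p <;> simp [nind, hy, mul_comm]
  simp_rw [h, integral_const_mul, integral_indicator (measurableSet_dyadicI _), avgI]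

lemma integral_mul_haar {u : ℝ → ℝ} (hu : Integrable u) (k n : ℤ) :
    ∫ y, u y * haar (k, n) y = 2 ^ (-(k : ℝ) / 2) *
      ((∫ y in dyadicI (k - 1, 2 * n), u y) - ∫ y in dyadicI (k - 1, 2 * n + 1), u y) := by
  have h : ∀ y, u y * haar (k, n) y = 2 ^ (-(k : ℝ) / 2) *
      ((dyadicI (k - 1, 2 * n)).indicator u y - (dyadicI (k - 1, 2 * n + 1)).indicator u y) :=
    fun y => by simp only [haar, indicator_apply]; split_ifs <;> simp [mul_comm]
  simp_rw [h]
  rw [integral_const_mul, integral_sub (hu.indicator (measurableSet_dyadicI _))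
    (hu.indicator (measurableSet_dyadicI _)), integral_indicator (measurableSet_dyadicI _),
    integral_indicator (measurableSet_dyadicI _)]

lemma setIntegral_dyadicI_eq_add {u : ℝ → ℝ} (hu : Integrable u) (k n : ℤ) :
    ∫ y in dyadicI (k, n), u y =
      (∫ y in dyadicI (k - 1, 2 * n), u y) + ∫ y in dyadicI (k - 1, 2 * n + 1), u y := by
  rw [dyadicI_eq_union]
  exact setIntegral_union (disjoint_dyadicI_children k n) (measurableSet_dyadicI _) hu.integrableOn
    hu.integrableOn

def dyadicAvg (u : ℝ → ℝ) (k : ℤ) (x : ℝ) : ℝ := avgI u (dyadicIdx k x)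

lemma integral_mul_nind_dyadicIdx (u : ℝ → ℝ) (k : ℤ) (x : ℝ) :
    ∫ y, u y * nind (dyadicIdx k x) y = dyadicAvg u k x :=
  integral_mul_nind u _

lemma integral_mul_haar_mul_haar_dyadicIdx {u : ℝ → ℝ} (hu : Integrable u) (k : ℤ) (x : ℝ) :
    (∫ y, u y * haar (dyadicIdx k x) y) * haar (dyadicIdx k x) x =
      dyadicAvg u (k - 1) x - dyadicAvg u k x := by
  set n := ⌊x / 2 ^ k⌋
  set m := ⌊x / 2 ^ (k - 1)⌋
  have hx : x ∈ dyadicI (k - 1, m) := mem_dyadicI_dyadicIdx (k - 1) x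
  have hmn : n = m / 2 := by simpa using floor_div_two_zpow_add x (k - 1) 1
  have hpred : ((2 : ℝ) ^ (k - 1))⁻¹ = 2 * ((2 : ℝ) ^ k)⁻¹ := by
    rw [zpow_sub_one₀ two_ne_zero, mul_inv, inv_inv, mul_comm]
  have hEk : dyadicAvg u k x = ((2 : ℝ) ^ k)⁻¹ * ((∫ y in dyadicI (k - 1, 2 * n), u y) +
      ∫ y in dyadicI (k - 1, 2 * n + 1), u y) := by
    rw [dyadicAvg, avgI, dlen, dyadicIdx, setIntegral_dyadicI_eq_add hu]
  have hEpred : dyadicAvg u (k - 1) x = 2 * ((2 : ℝ) ^ k)⁻¹ * ∫ y in dyadicI (k - 1, m), u y := by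
    rw [dyadicAvg, avgI, dlen, dyadicIdx, hpred]
  have hsq := two_rpow_neg_half_mul_self k
  rw [dyadicIdx, integral_mul_haar hu, hEk, hEpred]
  rcases Int.emod_two_eq_zero_or_one m with hm | hm
  · rw [show m = 2 * n by omega] at hx ⊢
    rw [haar_of_mem_left hx]
    linear_combination (∫ y in dyadicI (k - 1, 2 * n), u y) * hsq -
      (∫ y in dyadicI (k - 1, 2 * n + 1), u y) * hsq
  · rw [show m = 2 * n + 1 by omega] at hx ⊢
    rw [haar_of_mem_right hx]
    linear_combination (∫ y in dyadicI (k - 1, 2 * n + 1), u y) * hsq -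
      (∫ y in dyadicI (k - 1, 2 * n), u y) * hsq

lemma abs_dyadicAvg_le {u : ℝ → ℝ} (hu : Integrable u) (k : ℤ) (x : ℝ) :
    |dyadicAvg u k x| ≤ (∫ y, |u y|) * ((2 : ℝ) ^ k)⁻¹ := by
  have hint : |∫ y in dyadicI (dyadicIdx k x), u y| ≤ ∫ y, |u y| :=
    (abs_integral_le_integral_abs).trans
      (setIntegral_le_integral hu.abs (Eventually.of_forall fun y => abs_nonneg _))
  rw [dyadicAvg, avgI, dlen, dyadicIdx, abs_mul, abs_inv, abs_of_pos (by positivity), mul_comm]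
  exact mul_le_mul_of_nonneg_right hint (by positivity)

lemma dyadicAvg_eq_of_forall_mem {u : ℝ → ℝ} {k : ℤ} {x : ℝ}
    (h : ∀ y ∈ dyadicI (dyadicIdx k x), u y = u x) : dyadicAvg u k x = u x := by
  rw [dyadicAvg, avgI, setIntegral_congr_fun (measurableSet_dyadicI _) h, setIntegral_const,
    measureReal_def, volume_dyadicI, ENNReal.toReal_ofReal (dlen_pos _).le, smul_eq_mul,
    inv_mul_cancel_left₀ (dlen_pos _).ne']

lemma indicator_dyadicI_eq_of_le {q : ℤ × ℤ} {k : ℤ} (hk : k ≤ q.1) {x y : ℝ}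
    (hy : y ∈ dyadicI (dyadicIdx k x)) :
    (dyadicI q).indicator (1 : ℝ → ℝ) y = (dyadicI q).indicator 1 x := by
  have hiff : y ∈ dyadicI q ↔ x ∈ dyadicI q := by
    rw [mem_dyadicI_iff, mem_dyadicI_iff, floor_div_two_zpow_congr hk (mem_dyadicI_iff.1 hy)]
  simp only [indicator_apply, hiff, Pi.one_apply]

lemma IsDyadicSimple.eventually_dyadicAvg_eq {u : ℝ → ℝ} (hu : IsDyadicSimple u) (x : ℝ) :
    ∀ᶠ k in atBot, dyadicAvg u k x = u x := by
  obtain ⟨s, c, rfl⟩ := hu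
  obtain ⟨k₀, hk₀⟩ := (s.image Prod.fst).bddBelow
  refine eventually_atBot.2 ⟨k₀, fun k hk => dyadicAvg_eq_of_forall_mem fun y hy =>
    Finset.sum_congr rfl fun q hq => ?_⟩
  rw [indicator_dyadicI_eq_of_le (hk.trans (hk₀ (Finset.mem_image_of_mem _ hq))) hy]

/-- For simple functions `f, g` on `ℝ`, the pointwise product decomposes a.e.
as the sum of the three one-parameter dyadic paraproducts
`π^{(0,1)}(f,g) + π^{(1,0)}(f,g) + π^{(1,1)}(f,g)`. -/
theorem product_eq_sum_of_paraproducts (f g : ℝ → ℝ)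
    (hf : IsDyadicSimple f) (hg : IsDyadicSimple g) :
    ∀ᵐ x : ℝ ∂volume, f x * g x =
      (∑' p : ℤ × ℤ, (∫ y : ℝ, f y * nind p y) * (∫ y : ℝ, g y * haar p y) * haar p x) +
      (∑' p : ℤ × ℤ, (∫ y : ℝ, f y * haar p y) * (∫ y : ℝ, g y * nind p y) * haar p x) +
      (∑' p : ℤ × ℤ, (∫ y : ℝ, f y * haar p y) * (∫ y : ℝ, g y * haar p y) * nind p x) := by
  refine Eventually.of_forall fun x => ?_
  have hfi := hf.integrable
  have hgi := hg.integrable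
  rw [tsum_eq_tsum_dyadicIdx x fun p hp => by rw [haar_eq_zero hp, mul_zero],
    tsum_eq_tsum_dyadicIdx x fun p hp => by rw [haar_eq_zero hp, mul_zero],
    tsum_eq_tsum_dyadicIdx x fun p hp => by rw [nind_eq_zero hp, mul_zero]]
  rw [← tsum_product_rule_telescope (hf.eventually_dyadicAvg_eq x) (hg.eventually_dyadicAvg_eq x)
    (abs_dyadicAvg_le hfi · x) (abs_dyadicAvg_le hgi · x)]
  congr 1
  congr 1
  all_goals refine tsum_congr fun k => ?_
  · rw [mul_assoc, integral_mul_haar_mul_haar_dyadicIdx hgi, integral_mul_nind_dyadicIdx]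
  · rw [mul_right_comm, integral_mul_haar_mul_haar_dyadicIdx hfi, integral_mul_nind_dyadicIdx]
  · rw [← integral_mul_haar_mul_haar_dyadicIdx hfi, ← integral_mul_haar_mul_haar_dyadicIdx hgi,
      nind_dyadicIdx_self]
    ring

end
end

section
/- A family 𝒞 of axis-parallel rectangles in ℝ² is Λ-Carleson (meaning Σ_{R∈𝒞, R⊆Ω} |R| ≤ Λ|Ω| for every open set Ω of finite measure) if and only if it is η-sparse with η = Λ^{-1}, i.e., there exist pairwise disjoint measurable sets E_R ⊂ R with |E_R| ≥ Λ^{-1}|R|. (It suffices to prove the statement for finite families 𝒞.) -/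
/-!
Sparse families are Carleson: the sets `E_R` of the rectangles contained in `Ω` are disjoint
subsets of `Ω`, of total measure at least `Λ⁻¹ Σ |R|`.

Conversely, by outer regularity the Carleson condition gives `Σ_{R ∈ S} |R| ≤ Λ |⋃ S|` for every
subfamily `S`. Cutting the union into the Venn cells of the family, this is Hall's condition for
a fractional transport problem in which each rectangle `R` demands `Λ⁻¹ |R|` and each cell
supplies its measure to the rectangles containing it. Gale's supply–demand theorem gives a
transport plan; Lebesgue measure being nonatomic, each cell can be cut into disjoint pieces of
the prescribed measures, and `E_R` is the union of the pieces sent to `R`.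
-/

open MeasureTheory Set
open scoped ENNReal Classical

noncomputable section

/-- An axis-parallel rectangle `[a,b) × [c,d)` in the plane, indexed by `((a,b),(c,d))`. -/
def rset (r : (ℝ × ℝ) × (ℝ × ℝ)) : Set (ℝ × ℝ) := (Set.Ico r.1.1 r.1.2) ×ˢ (Set.Ico r.2.1 r.2.2)

open Filter Topology

section Gale

variable {ι σ : Type*} (P : ι → σ → Prop) (B : Finset σ)

def relImage (S : Finset ι) : Finset σ := B.filter fun t => ∃ i ∈ S, P i t

def HallCondition (A : Finset ι) (d : ι → ℝ) (s : σ → ℝ) : Prop :=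
  ∀ S ⊆ A, ∑ i ∈ S, d i ≤ ∑ t ∈ relImage P B S, s t

structure IsTransport (A : Finset ι) (d : ι → ℝ) (s : σ → ℝ) (x : ι → σ → ℝ) : Prop where
  nonneg : ∀ i t, 0 ≤ x i t
  support : ∀ i t, x i t ≠ 0 → i ∈ A ∧ P i t
  demand : ∀ i ∈ A, ∑ t ∈ B, x i t = d i
  supply : ∀ t ∈ B, ∑ i ∈ A, x i t ≤ s t

variable {P B} {A S : Finset ι} {d : ι → ℝ} {s : σ → ℝ} {x : ι → σ → ℝ}

lemma mem_relImage {t : σ} : t ∈ relImage P B S ↔ t ∈ B ∧ ∃ i ∈ S, P i t := Finset.mem_filter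

lemma relImage_union (S S' : Finset ι) :
    relImage P B (S ∪ S') = relImage P B S ∪ relImage P B S' := by
  ext t
  simp only [mem_relImage, Finset.mem_union, or_and_right, exists_or, and_or_left]

lemma HallCondition.mono {A' : Finset ι} (hall : HallCondition P B A d s) (h : A' ⊆ A) :
    HallCondition P B A' d s :=
  fun S hS => hall S (hS.trans h)

lemma HallCondition.exists_pos_supply (hall : HallCondition P B A d s) {i₀ : ι} (hi₀ : i₀ ∈ A)
    (hd₀ : 0 < d i₀) : ∃ t₀ ∈ B, P i₀ t₀ ∧ 0 < s t₀ := by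
  have := hall {i₀} (Finset.singleton_subset_iff.2 hi₀)
  rw [Finset.sum_singleton] at this
  obtain ⟨t, ht, hst⟩ := Finset.exists_lt_of_sum_lt (f := fun _ => 0) (g := s)
    (by simpa using hd₀.trans_le this)
  obtain ⟨htB, j, hj, hP⟩ := mem_relImage.1 ht
  rw [Finset.mem_singleton] at hj
  exact ⟨t, htB, hj ▸ hP, hst⟩

lemma isTransport_empty (hs : ∀ t ∈ B, 0 ≤ s t) : IsTransport P B ∅ d s 0 where
  nonneg _ _ := le_rfl
  support _ _ h := absurd rfl h
  demand _ h := absurd h (Finset.notMem_empty _)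
  supply t ht := by simpa using hs t ht

lemma IsTransport.sum_eq_zero_of_notMem_relImage (hx : IsTransport P B S d s x) {t : σ}
    (ht : t ∈ B) (htS : t ∉ relImage P B S) : ∑ i ∈ S, x i t = 0 :=
  Finset.sum_eq_zero fun i hi => by_contra fun h =>
    htS (mem_relImage.2 ⟨ht, i, hi, (hx.support i t h).2⟩)

lemma HallCondition.sdiff_of_tight (hall : HallCondition P B A d s) (hSA : S ⊆ A)
    (htight : ∑ i ∈ S, d i = ∑ t ∈ relImage P B S, s t) (hx : IsTransport P B S d s x) :
    HallCondition P B (A \ S) d (fun t => s t - ∑ i ∈ S, x i t) := by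
  intro S' hS'
  have hdisj : Disjoint S S' := Finset.disjoint_of_subset_right hS' Finset.disjoint_sdiff
  have hunion := hall (S ∪ S') (Finset.union_subset hSA (hS'.trans Finset.sdiff_subset))
  rw [Finset.sum_union hdisj, relImage_union, htight,
    ← Finset.union_sdiff_self_eq_union, Finset.sum_union Finset.disjoint_sdiff] at hunion
  have hfresh : ∑ t ∈ relImage P B S' \ relImage P B S, s t
      ≤ ∑ t ∈ relImage P B S', (s t - ∑ i ∈ S, x i t) := by
    calc ∑ t ∈ relImage P B S' \ relImage P B S, s t
        = ∑ t ∈ relImage P B S' \ relImage P B S, (s t - ∑ i ∈ S, x i t) := by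
          refine Finset.sum_congr rfl fun t ht => ?_
          obtain ⟨ht', htS⟩ := Finset.mem_sdiff.1 ht
          rw [hx.sum_eq_zero_of_notMem_relImage (mem_relImage.1 ht').1 htS, sub_zero]
      _ ≤ _ := Finset.sum_le_sum_of_subset_of_nonneg Finset.sdiff_subset fun t ht _ =>
          sub_nonneg.2 (hx.supply t (mem_relImage.1 ht).1)
  linarith

lemma IsTransport.piecewise {y : ι → σ → ℝ} (hSA : S ⊆ A) (hx : IsTransport P B S d s x)
    (hy : IsTransport P B (A \ S) d (fun t => s t - ∑ i ∈ S, x i t) y) :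
    IsTransport P B A d s (fun i t => if i ∈ S then x i t else y i t) where
  nonneg i t := by split_ifs; exacts [hx.nonneg i t, hy.nonneg i t]
  support i t h := by
    split_ifs at h with hi
    · exact ⟨hSA (hx.support i t h).1, (hx.support i t h).2⟩
    · exact ⟨(Finset.mem_sdiff.1 (hy.support i t h).1).1, (hy.support i t h).2⟩
  demand i hi := by
    by_cases hiS : i ∈ S
    · simpa only [hiS, if_true] using hx.demand i hiS
    · simpa only [hiS, if_false] using hy.demand i (Finset.mem_sdiff.2 ⟨hi, hiS⟩)
  supply t ht := by
    rw [← Finset.sum_sdiff hSA]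
    have hrest := hy.supply t ht
    rw [Finset.sum_congr rfl fun i hi => if_neg (Finset.mem_sdiff.1 hi).2,
      Finset.sum_congr rfl fun i hi => if_pos hi]
    linarith

lemma IsTransport.of_erase {i₀ : ι} (hx : IsTransport P B (A.erase i₀) d s x) (hi₀ : i₀ ∈ A)
    (hd : d i₀ = 0) : IsTransport P B A d s x where
  nonneg := hx.nonneg
  support i t h := ⟨Finset.mem_of_mem_erase (hx.support i t h).1, (hx.support i t h).2⟩
  demand i hi := by
    by_cases h : i = i₀
    · subst h
      rw [hd]
      exact Finset.sum_eq_zero fun t _ => by_contra fun h =>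
        Finset.notMem_erase i A (hx.support i t h).1
    · exact hx.demand i (Finset.mem_erase.2 ⟨h, hi⟩)
  supply t ht := by
    rw [← Finset.add_sum_erase A _ hi₀]
    have : x i₀ t = 0 := by_contra fun h => Finset.notMem_erase i₀ A (hx.support i₀ t h).1
    simpa [this] using hx.supply t ht

lemma IsTransport.add_single {i₀ : ι} {t₀ : σ} {m : ℝ}
    (hx : IsTransport P B A (d - Pi.single i₀ m) (s - Pi.single t₀ m) x) (hi₀ : i₀ ∈ A)
    (ht₀ : t₀ ∈ B) (hP : P i₀ t₀) (hm : 0 ≤ m) :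
    IsTransport P B A d s (fun i t => x i t + if i = i₀ ∧ t = t₀ then m else 0) where
  nonneg i t := add_nonneg (hx.nonneg i t) (by split_ifs; exacts [hm, le_rfl])
  support i t h := by
    by_cases hit : i = i₀ ∧ t = t₀
    · exact hit.1 ▸ hit.2 ▸ ⟨hi₀, hP⟩
    · rw [if_neg hit, add_zero] at h
      exact hx.support i t h
  demand i hi := by
    rw [Finset.sum_add_distrib, hx.demand i hi]
    by_cases h : i = i₀
    · subst h; simp [ht₀]
    · simp [h]
  supply t ht := by
    have := hx.supply t ht
    rw [Finset.sum_add_distrib]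
    by_cases h : t = t₀
    · subst h; simp [hi₀] at this ⊢; linarith
    · simp_all

lemma HallCondition.sub_single (hall : HallCondition P B A d s) {i₀ : ι} {t₀ : σ}
    (ht₀ : t₀ ∈ B) (hP : P i₀ t₀) {m : ℝ} (hslack : ∀ S ⊆ A, i₀ ∉ S → t₀ ∈ relImage P B S →
      ∑ i ∈ S, d i + m ≤ ∑ t ∈ relImage P B S, s t) :
    HallCondition P B A (d - Pi.single i₀ m) (s - Pi.single t₀ m) := by
  intro S hS
  simp only [Pi.sub_apply, Finset.sum_sub_distrib, Finset.sum_pi_single']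
  have := hall S hS
  by_cases hi : i₀ ∈ S
  · rw [if_pos hi, if_pos (mem_relImage.2 ⟨ht₀, i₀, hi, hP⟩)]
    linarith
  · by_cases ht : t₀ ∈ relImage P B S
    · rw [if_neg hi, if_pos ht]
      linarith [hslack S hS hi ht]
    · rw [if_neg hi, if_neg ht]
      linarith

lemma HallCondition.exists_isTransport_of_tight (hall : HallCondition P B A d s)
    (hs : ∀ t ∈ B, 0 ≤ s t) (hSA : S ⊂ A) (hS : S.Nonempty)
    (htight : ∑ i ∈ S, d i = ∑ t ∈ relImage P B S, s t)
    (solve : ∀ A' ⊂ A, ∀ s' : σ → ℝ, (∀ t ∈ B, 0 ≤ s' t ∧ s' t ≤ s t) →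
      HallCondition P B A' d s' → ∃ x, IsTransport P B A' d s' x) :
    ∃ x, IsTransport P B A d s x := by
  obtain ⟨x, hx⟩ := solve S hSA s (fun t ht => ⟨hs t ht, le_rfl⟩) (hall.mono hSA.subset)
  obtain ⟨y, hy⟩ := solve (A \ S) (Finset.sdiff_ssubset hSA.subset hS) _
    (fun t ht => ⟨sub_nonneg.2 (hx.supply t ht),
      sub_le_self _ (Finset.sum_nonneg fun i _ => hx.nonneg i t)⟩)
    (hall.sdiff_of_tight hSA.subset htight hx)
  exact ⟨_, hx.piecewise hSA.subset hy⟩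

/-- The largest mass that can be moved along the edge `(i₀, t₀)` without breaking Hall's
condition: the minimum of `d i₀`, `s t₀` and the slacks of the subsets avoiding `i₀` whose
image contains `t₀`. -/
lemma HallCondition.exists_pivot (hall : HallCondition P B A d s)
    (hslack : ∀ S ⊂ A, S.Nonempty → ∑ i ∈ S, d i < ∑ t ∈ relImage P B S, s t)
    {i₀ : ι} {t₀ : σ} (hi₀ : i₀ ∈ A) (ht₀ : t₀ ∈ B) (hP : P i₀ t₀) (hd₀ : 0 < d i₀)
    (hs₀ : 0 < s t₀) :
    ∃ m : ℝ, 0 < m ∧ m ≤ d i₀ ∧ m ≤ s t₀ ∧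
      HallCondition P B A (d - Pi.single i₀ m) (s - Pi.single t₀ m) ∧
      (m = d i₀ ∨ m = s t₀ ∨ ∃ S ⊂ A, S.Nonempty ∧
        ∑ i ∈ S, (d - Pi.single i₀ m : ι → ℝ) i =
          ∑ t ∈ relImage P B S, (s - Pi.single t₀ m : σ → ℝ) t) := by
  set 𝒯 := (A.erase i₀).powerset.filter fun S => t₀ ∈ relImage P B S
  have h𝒯 : ∀ S ∈ 𝒯, S ⊂ A ∧ S.Nonempty ∧ i₀ ∉ S ∧ t₀ ∈ relImage P B S := by
    intro S hS
    obtain ⟨hSA, ht⟩ := Finset.mem_filter.1 hS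
    have hSA := Finset.mem_powerset.1 hSA
    obtain ⟨-, i, hi, -⟩ := mem_relImage.1 ht
    exact ⟨Finset.ssubset_of_subset_of_ssubset hSA (Finset.erase_ssubset hi₀), ⟨i, hi⟩,
      fun h => Finset.notMem_erase i₀ A (hSA h), ht⟩
  set slack := fun S => ∑ t ∈ relImage P B S, s t - ∑ i ∈ S, d i
  set vals := insert (d i₀) (insert (s t₀) (𝒯.image slack))
  set m := vals.min' (Finset.insert_nonempty _ _)
  have hm_le : ∀ v ∈ vals, m ≤ v := fun v hv => Finset.min'_le _ _ hv
  have hm_pos : 0 < m := by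
    refine (Finset.lt_min'_iff _ _).2 fun v hv => ?_
    simp only [vals, Finset.mem_insert, Finset.mem_image] at hv
    obtain rfl | rfl | ⟨S, hS, rfl⟩ := hv
    · exact hd₀
    · exact hs₀
    · obtain ⟨hSA, hSne, -⟩ := h𝒯 S hS
      exact sub_pos.2 (hslack S hSA hSne)
  refine ⟨m, hm_pos, hm_le _ (by simp [vals]), hm_le _ (by simp [vals]),
    hall.sub_single ht₀ hP fun S hSA hi ht => ?_, ?_⟩
  · have hS𝒯 : S ∈ 𝒯 := Finset.mem_filter.2 ⟨Finset.mem_powerset.2 fun j hj =>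
      Finset.mem_erase.2 ⟨fun h => hi (h ▸ hj), hSA hj⟩, ht⟩
    have := hm_le (slack S) (by simp [vals, Finset.mem_image_of_mem _ hS𝒯])
    simp only [slack] at this
    linarith
  · have hm_mem := Finset.min'_mem vals (Finset.insert_nonempty _ _)
    simp only [vals, Finset.mem_insert, Finset.mem_image] at hm_mem
    obtain h | h | ⟨S, hS, hSm⟩ := hm_mem
    · exact Or.inl h
    · exact Or.inr (Or.inl h)
    · obtain ⟨hSA, hSne, hi, ht⟩ := h𝒯 S hS
      refine Or.inr (Or.inr ⟨S, hSA, hSne, ?_⟩)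
      simp only [Pi.sub_apply, Finset.sum_sub_distrib, Finset.sum_pi_single', if_neg hi,
        if_pos ht]
      simp only [slack] at hSm
      linarith

lemma sub_single_mem_Icc {κ : Type*} {K : Finset κ} {f : κ → ℝ} (hf : ∀ k ∈ K, 0 ≤ f k)
    {a : κ} {m : ℝ} (hm : 0 ≤ m) (hma : m ≤ f a) :
    ∀ k ∈ K, (f - Pi.single a m : κ → ℝ) k ∈ Icc 0 (f k) := by
  intro k hk
  simp only [Pi.sub_apply, Pi.single_apply, mem_Icc]
  split_ifs with h
  · subst h; constructor <;> linarith
  · simpa using hf k hk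

lemma card_filter_pos_lt {s' : σ → ℝ} (h : ∀ t ∈ B, s' t ≤ s t) {t₀ : σ} (ht₀ : t₀ ∈ B)
    (h₀ : s' t₀ ≤ 0) (hs₀ : 0 < s t₀) :
    (B.filter fun t => 0 < s' t).card < (B.filter fun t => 0 < s t).card := by
  refine Finset.card_lt_card ⟨B.monotone_filter_right fun t ht h' => h'.trans_le (h t ht),
    fun hsub => ?_⟩
  have := (Finset.mem_filter.1 (hsub (Finset.mem_filter.2 ⟨ht₀, hs₀⟩))).2
  linarith

theorem HallCondition.exists_isTransport (hall : HallCondition P B A d s)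
    (hs : ∀ t ∈ B, 0 ≤ s t) (hd : ∀ i ∈ A, 0 ≤ d i) : ∃ x, IsTransport P B A d s x := by
  -- Induction on `#A + #{t ∈ B | 0 < s t}`: a tight proper subset splits the instance into two
  -- with fewer demands; otherwise a pivot serves `i₀`, exhausts `t₀` or creates a tight subset.
  induction hn : A.card + (B.filter fun t => 0 < s t).card using Nat.strong_induction_on
    generalizing A d s with
  | _ n ih =>
  subst hn
  have solve : ∀ A' ⊂ A, ∀ (d' : ι → ℝ) (s' : σ → ℝ), (∀ i ∈ A', 0 ≤ d' i) →
      (∀ t ∈ B, 0 ≤ s' t ∧ s' t ≤ s t) → HallCondition P B A' d' s' →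
      ∃ x, IsTransport P B A' d' s' x := by
    intro A' hA' d' s' hd' hs' hall'
    have := Finset.card_lt_card hA'
    have := Finset.card_le_card <|
      B.monotone_filter_right fun t ht (h : 0 < s' t) => h.trans_le (hs' t ht).2
    exact ih _ (by omega) hall' (fun t ht => (hs' t ht).1) hd' rfl
  by_cases htight : ∃ S ⊂ A, S.Nonempty ∧ ∑ i ∈ S, d i = ∑ t ∈ relImage P B S, s t
  · obtain ⟨S, hSA, hS, hSt⟩ := htight
    exact hall.exists_isTransport_of_tight hs hSA hS hSt fun A' hA' s' =>
      solve A' hA' d s' fun i hi => hd i (hA'.subset hi)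
  have hslack : ∀ S ⊂ A, S.Nonempty → ∑ i ∈ S, d i < ∑ t ∈ relImage P B S, s t :=
    fun S hSA hS => (hall S hSA.subset).lt_of_ne fun h => htight ⟨S, hSA, hS, h⟩
  obtain rfl | ⟨i₀, hi₀⟩ := A.eq_empty_or_nonempty
  · exact ⟨0, isTransport_empty hs⟩
  obtain hd₀ | hd₀ := (hd i₀ hi₀).eq_or_lt
  · obtain ⟨x, hx⟩ := solve _ (Finset.erase_ssubset hi₀) d s
      (fun i hi => hd i (Finset.mem_of_mem_erase hi)) (fun t ht => ⟨hs t ht, le_rfl⟩)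
      (hall.mono (Finset.erase_subset _ _))
    exact ⟨x, hx.of_erase hi₀ hd₀.symm⟩
  obtain ⟨t₀, ht₀, hP, hs₀⟩ := hall.exists_pos_supply hi₀ hd₀
  obtain ⟨m, hm, hmd, hms, hall', hcase⟩ := hall.exists_pivot hslack hi₀ ht₀ hP hd₀ hs₀
  have hs' := sub_single_mem_Icc hs hm.le hms
  have hd' := fun i hi => (sub_single_mem_Icc hd hm.le hmd i hi).1
  suffices ∃ x, IsTransport P B A (d - Pi.single i₀ m) (s - Pi.single t₀ m) x by
    obtain ⟨x, hx⟩ := this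
    exact ⟨_, hx.add_single hi₀ ht₀ hP hm.le⟩
  obtain rfl | rfl | ⟨S, hSA, hS, hSt⟩ := hcase
  · obtain ⟨x, hx⟩ := solve _ (Finset.erase_ssubset hi₀) _ _
      (fun i hi => hd' i (Finset.mem_of_mem_erase hi)) hs' (hall'.mono (Finset.erase_subset _ _))
    exact ⟨x, hx.of_erase hi₀ (by simp)⟩
  · have := card_filter_pos_lt (fun t ht => (hs' t ht).2) ht₀ (by simp) hs₀
    exact ih _ (by omega) hall' (fun t ht => (hs' t ht).1) hd' rfl
  · exact hall'.exists_isTransport_of_tight (fun t ht => (hs' t ht).1) hSA hS hSt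
      fun A' hA' s'' hs'' => solve A' hA' _ s'' (fun i hi => hd' i (hA'.subset hi))
        fun t ht => ⟨(hs'' t ht).1, (hs'' t ht).2.trans (hs' t ht).2⟩

end Gale

section Darboux

variable {α ι : Type*} [MeasurableSpace α]

def HasDarbouxProperty (μ : Measure α) : Prop :=
  ∀ ⦃A : Set α⦄, MeasurableSet A → μ A ≠ ∞ → ∀ ⦃c : ℝ≥0∞⦄, c ≤ μ A →
    ∃ E ⊆ A, MeasurableSet E ∧ μ E = c

lemma continuous_measure_Iio (ν : Measure ℝ) [IsFiniteMeasure ν] [NullSingletonClass ν] :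
    Continuous fun τ => ν (Iio τ) := by
  refine continuous_iff_continuousAt.2 fun b => ?_
  set δ : ℝ → ℝ≥0∞ := fun τ => ν (Icc (b - |τ - b|) (b + |τ - b|))
  have hδ : Tendsto δ (𝓝 b) (𝓝 0) :=
    (tendsto_measure_Icc ν b).comp <| by simpa using (continuous_sub_right b).abs.tendsto b
  have hup : ∀ τ, ν (Iio τ) ≤ ν (Iio b) + δ τ := fun τ =>
    (measure_mono fun x (hx : x < τ) => by
      by_cases h : x < b
      · exact Or.inl h
      · exact Or.inr ⟨by linarith [abs_nonneg (τ - b)], by linarith [le_abs_self (τ - b)]⟩).trans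
      (measure_union_le _ _)
  have hlow : ∀ τ, ν (Iio b) ≤ ν (Iio τ) + δ τ := fun τ =>
    (measure_mono fun x (hx : x < b) => by
      by_cases h : x < τ
      · exact Or.inl h
      · exact Or.inr ⟨by linarith [neg_abs_le (τ - b)], by linarith [abs_nonneg (τ - b)]⟩).trans
      (measure_union_le _ _)
  refine tendsto_of_tendsto_of_tendsto_of_le_of_le ?_ ?_ (fun τ => tsub_le_iff_right.2 (hlow τ)) hup
  · simpa using ENNReal.Tendsto.sub tendsto_const_nhds hδ (Or.inl (measure_ne_top ν _))
  · simpa using tendsto_const_nhds.add hδ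

lemma exists_measure_Iio_eq (ν : Measure ℝ) [IsFiniteMeasure ν] [NullSingletonClass ν]
    {c : ℝ≥0∞} (hc : c ∈ Ioo 0 (ν univ)) : ∃ τ, ν (Iio τ) = c := by
  have hbot : Tendsto (fun τ => ν (Iio τ)) atBot (𝓝 0) := by
    have hempty : ⋂ τ : ℝ, Iio τ = ∅ := iInter_eq_empty_iff.2 fun x => ⟨x, lt_irrefl x⟩
    have := tendsto_measure_iInter_atBot (μ := ν) (fun τ => measurableSet_Iio.nullMeasurableSet)
      (fun a b hab => Iio_subset_Iio hab) ⟨0, measure_ne_top ν _⟩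
    rwa [Function.comp_def, hempty, measure_empty] at this
  have htop : Tendsto (fun τ => ν (Iio τ)) atTop (𝓝 (ν univ)) := by
    simpa [Function.comp_def] using
      tendsto_measure_iUnion_atTop (μ := ν) fun a b hab => Iio_subset_Iio hab
  obtain ⟨τ, -, hτ⟩ := isPreconnected_univ.intermediate_value_Ioo (by simp) (by simp)
    (continuous_measure_Iio ν).continuousOn hbot htop hc
  exact ⟨τ, hτ⟩

lemma hasDarbouxProperty_of_measure_preimage_singleton {μ : Measure α} {f : α → ℝ}
    (hf : Measurable f) (hfib : ∀ x, μ (f ⁻¹' {x}) = 0) : HasDarbouxProperty μ := by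
  intro A hA hAfin c hc
  obtain rfl | hc0 := eq_zero_or_pos c
  · exact ⟨∅, empty_subset _, .empty, measure_empty⟩
  obtain rfl | hcA := hc.eq_or_lt
  · exact ⟨A, subset_rfl, hA, rfl⟩
  set ν := (μ.restrict A).map f
  have hν : ∀ s, MeasurableSet s → ν s = μ (A ∩ f ⁻¹' s) := fun s hs => by
    rw [Measure.map_apply hf hs, Measure.restrict_apply (hf hs), inter_comm]
  have hνA : ν univ = μ A := by simpa using hν univ .univ
  have : IsFiniteMeasure ν := ⟨hνA ▸ hAfin.lt_top⟩
  have : NullSingletonClass ν := ⟨fun x => by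
    rw [hν _ (measurableSet_singleton x)]
    exact measure_mono_null inter_subset_right (hfib x)⟩
  obtain ⟨τ, hτ⟩ := exists_measure_Iio_eq ν ⟨hc0, hνA ▸ hcA⟩
  exact ⟨A ∩ f ⁻¹' Iio τ, inter_subset_left, hA.inter (hf measurableSet_Iio),
    by rw [← hν _ measurableSet_Iio, hτ]⟩

lemma volume_hasDarbouxProperty : HasDarbouxProperty (volume : Measure (ℝ × ℝ)) :=
  hasDarbouxProperty_of_measure_preimage_singleton measurable_fst fun x => by
    rw [← prod_univ, Measure.volume_eq_prod, Measure.prod_prod, Real.volume_singleton, zero_mul]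

lemma HasDarbouxProperty.exists_pairwiseDisjoint {μ : Measure α} (hμ : HasDarbouxProperty μ)
    {A : Set α} (hA : MeasurableSet A) (hAfin : μ A ≠ ∞) (s : Finset ι) (c : ι → ℝ≥0∞)
    (hc : ∑ i ∈ s, c i ≤ μ A) :
    ∃ F : ι → Set α, (∀ i, F i ⊆ A) ∧ (∀ i, MeasurableSet (F i)) ∧ (∀ i ∈ s, μ (F i) = c i) ∧
      (s : Set ι).PairwiseDisjoint F := by
  induction s using Finset.cons_induction generalizing A with
  | empty => exact ⟨fun _ => ∅, fun _ => empty_subset _, fun _ => .empty, by simp, by simp⟩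
  | cons i₀ s hi₀ ih =>
    rw [Finset.sum_cons] at hc
    have hc₀ : c i₀ ≠ ∞ := ne_top_of_le_ne_top hAfin (le_self_add.trans hc)
    obtain ⟨E, hEA, hE, hEc⟩ := hμ hA hAfin (le_self_add.trans hc)
    have hrest : ∑ i ∈ s, c i ≤ μ (A \ E) := by
      rw [measure_sdiff hEA hE.nullMeasurableSet (hEc ▸ hc₀), hEc]
      exact ENNReal.le_sub_of_add_le_left hc₀ hc
    obtain ⟨F, hFA, hF, hFc, hFdisj⟩ :=
      ih (hA.diff hE) (ne_top_of_le_ne_top hAfin (measure_mono sdiff_subset)) hrest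
    have hne : ∀ i ∈ s, i ≠ i₀ := fun i hi h => hi₀ (h ▸ hi)
    refine ⟨Function.update F i₀ E, fun i => ?_, fun i => ?_, fun i hi => ?_, ?_⟩
    · rcases eq_or_ne i i₀ with rfl | h
      · simpa using hEA
      · simpa [h] using (hFA i).trans sdiff_subset
    · rcases eq_or_ne i i₀ with rfl | h
      · simpa using hE
      · simpa [h] using hF i
    · rcases Finset.mem_cons.1 hi with rfl | hi
      · simpa using hEc
      · simpa [hne i hi] using hFc i hi
    · rw [Finset.coe_cons]
      refine (hFdisj.mono_on fun i hi => ?_).insert fun j hj _ => ?_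
      · simp [hne i hi]
      · simpa [hne j hj] using disjoint_sdiff_right.mono_right (hFA j)

end Darboux

section VennCell

variable {α ι : Type*} {R : ι → Set α} {𝒞 S T : Finset ι}

variable (R 𝒞) in
def vennCell (T : Finset ι) : Set α := {z | ∀ i ∈ 𝒞, z ∈ R i ↔ i ∈ T}

lemma measurableSet_vennCell [MeasurableSpace α] (hR : ∀ i ∈ 𝒞, MeasurableSet (R i))
    (T : Finset ι) :
    MeasurableSet (vennCell R 𝒞 T) := by
  have : vennCell R 𝒞 T = ⋂ i ∈ 𝒞, {z | z ∈ R i ↔ i ∈ T} := by ext; simp [vennCell]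
  rw [this]
  refine Finset.measurableSet_biInter _ fun i hi => ?_
  by_cases hiT : i ∈ T
  · simpa [hiT] using hR i hi
  · convert (hR i hi).compl using 1
    ext; simp [hiT]

lemma vennCell_subset {i : ι} (hi : i ∈ 𝒞) (hiT : i ∈ T) : vennCell R 𝒞 T ⊆ R i :=
  fun _ hz => (hz i hi).2 hiT

lemma pairwiseDisjoint_vennCell :
    (𝒞.powerset : Set (Finset ι)).PairwiseDisjoint (vennCell R 𝒞) := by
  intro T hT T' hT' hne
  refine Set.disjoint_left.2 fun z hz hz' => hne (Finset.ext fun i => ?_)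
  by_cases hi : i ∈ 𝒞
  · rw [← hz i hi, ← hz' i hi]
  · exact iff_of_false (fun h => hi (Finset.mem_powerset.1 hT h))
      (fun h => hi (Finset.mem_powerset.1 hT' h))

-- Supplies are indexed by the nonempty subfamilies only: their cells have finite measure.
lemma biUnion_eq_biUnion_vennCell (hS : S ⊆ 𝒞) :
    ⋃ i ∈ S, R i =
      ⋃ T ∈ relImage (· ∈ ·) (𝒞.powerset.filter Finset.Nonempty) S, vennCell R 𝒞 T := by
  ext z
  simp only [mem_iUnion₂, mem_relImage, Finset.mem_filter, Finset.mem_powerset]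
  constructor
  · rintro ⟨i, hi, hz⟩
    have hi' : i ∈ 𝒞.filter (z ∈ R ·) := Finset.mem_filter.2 ⟨hS hi, hz⟩
    exact ⟨_, ⟨⟨Finset.filter_subset _ _, i, hi'⟩, i, hi, hi'⟩, fun j hj => by simp [hj]⟩
  · rintro ⟨T, ⟨⟨hT, -⟩, i, hi, hiT⟩, hz⟩
    exact ⟨i, hi, vennCell_subset (hT hiT) hiT hz⟩

lemma measure_biUnion_eq_sum_vennCell [MeasurableSpace α] {μ : Measure α}
    (hR : ∀ i ∈ 𝒞, MeasurableSet (R i)) (hS : S ⊆ 𝒞) :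
    μ (⋃ i ∈ S, R i) = ∑ T ∈ relImage (· ∈ ·) (𝒞.powerset.filter Finset.Nonempty) S,
      μ (vennCell R 𝒞 T) := by
  rw [biUnion_eq_biUnion_vennCell hS]
  refine measure_biUnion_finset (pairwiseDisjoint_vennCell.subset fun T hT => ?_)
    fun T _ => measurableSet_vennCell hR T
  exact Finset.mem_coe.2 (Finset.filter_subset _ _ (mem_relImage.1 hT).1)

lemma hallCondition_vennCell [MeasurableSpace α] {μ : Measure α}
    (hR : ∀ i ∈ 𝒞, MeasurableSet (R i)) (hRfin : ∀ i ∈ 𝒞, μ (R i) ≠ ∞) {d : ι → ℝ≥0∞}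
    (hall : ∀ S ⊆ 𝒞, ∑ i ∈ S, d i ≤ μ (⋃ i ∈ S, R i)) :
    HallCondition (· ∈ ·) (𝒞.powerset.filter Finset.Nonempty) 𝒞 (fun i => (d i).toReal)
      (fun T => μ.real (vennCell R 𝒞 T)) := by
  intro S hS
  have hfin : μ (⋃ i ∈ S, R i) ≠ ∞ :=
    ne_top_of_le_ne_top (ENNReal.sum_ne_top.2 fun i hi => hRfin i (hS hi))
      (measure_biUnion_finset_le S R)
  calc ∑ i ∈ S, (d i).toReal = (∑ i ∈ S, d i).toReal :=
        (ENNReal.toReal_sum (ENNReal.sum_ne_top.1 (ne_top_of_le_ne_top hfin (hall S hS)))).symm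
    _ ≤ (μ (⋃ i ∈ S, R i)).toReal := ENNReal.toReal_mono hfin (hall S hS)
    _ = _ := by
      rw [measure_biUnion_eq_sum_vennCell hR hS] at hfin ⊢
      exact ENNReal.toReal_sum (ENNReal.sum_ne_top.1 hfin)

lemma HasDarbouxProperty.exists_pairwiseDisjoint_of_isTransport [MeasurableSpace α]
    {μ : Measure α} (hμ : HasDarbouxProperty μ) (hR : ∀ i ∈ 𝒞, MeasurableSet (R i))
    (hRfin : ∀ i ∈ 𝒞, μ (R i) ≠ ∞) {d : ι → ℝ} {x : ι → Finset ι → ℝ}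
    (hx : IsTransport (· ∈ ·) (𝒞.powerset.filter Finset.Nonempty) 𝒞 d
      (fun T => μ.real (vennCell R 𝒞 T)) x) :
    ∃ E : ι → Set α, (∀ i ∈ 𝒞, MeasurableSet (E i)) ∧ (∀ i ∈ 𝒞, E i ⊆ R i) ∧
      (∀ i ∈ 𝒞, μ (E i) = ENNReal.ofReal (d i)) ∧ (𝒞 : Set ι).PairwiseDisjoint E := by
  set B := 𝒞.powerset.filter Finset.Nonempty
  have hcake : ∀ T ∈ B, ∃ F : ι → Set α, (∀ i, F i ⊆ vennCell R 𝒞 T) ∧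
      (∀ i, MeasurableSet (F i)) ∧ (∀ i ∈ 𝒞, μ (F i) = ENNReal.ofReal (x i T)) ∧
      (𝒞 : Set ι).PairwiseDisjoint F := by
    intro T hT
    obtain ⟨hT𝒞, i, hi⟩ : T ⊆ 𝒞 ∧ T.Nonempty := by simpa [B] using hT
    refine hμ.exists_pairwiseDisjoint (measurableSet_vennCell hR T) (ne_top_of_le_ne_top
      (hRfin i (hT𝒞 hi)) (measure_mono (vennCell_subset (hT𝒞 hi) hi))) 𝒞 _ ?_
    rw [← ENNReal.ofReal_sum_of_nonneg fun i _ => hx.nonneg i T]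
    exact (ENNReal.ofReal_le_ofReal (hx.supply T hT)).trans ENNReal.ofReal_toReal_le
  choose! F hFcell hF hFμ hFdisj using hcake
  have hpiece : ∀ T ∈ B, ∀ T' ∈ B, ∀ i ∈ 𝒞, ∀ j ∈ 𝒞, (T, i) ≠ (T', j) →
      Disjoint (F T i) (F T' j) := by
    intro T hT T' hT' i hi j hj hne
    by_cases hTT : T = T'
    · subst hTT
      exact hFdisj T hT hi hj fun h => hne (h ▸ rfl)
    · exact (pairwiseDisjoint_vennCell (Finset.filter_subset _ _ hT)
        (Finset.filter_subset _ _ hT') hTT).mono (hFcell T hT i) (hFcell T' hT' j)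
  refine ⟨fun i => ⋃ T ∈ B.filter (i ∈ ·), F T i, fun i _ => ?_, fun i hi => ?_, fun i hi => ?_,
    fun i hi j hj hij => ?_⟩
  · exact Finset.measurableSet_biUnion _ fun T hT => hF T (Finset.mem_filter.1 hT).1 i
  · exact iUnion₂_subset fun T hT =>
      (hFcell T (Finset.mem_filter.1 hT).1 i).trans (vennCell_subset hi (Finset.mem_filter.1 hT).2)
  · rw [measure_biUnion_finset (fun T hT T' hT' hne => hpiece T (Finset.mem_filter.1 hT).1 T'
      (Finset.mem_filter.1 hT').1 i hi i hi fun h => hne (Prod.ext_iff.1 h).1)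
      fun T hT => hF T (Finset.mem_filter.1 hT).1 i]
    calc ∑ T ∈ B.filter (i ∈ ·), μ (F T i) = ∑ T ∈ B.filter (i ∈ ·), ENNReal.ofReal (x i T) :=
          Finset.sum_congr rfl fun T hT => hFμ T (Finset.mem_filter.1 hT).1 i hi
      _ = ∑ T ∈ B, ENNReal.ofReal (x i T) := Finset.sum_filter_of_ne fun T _ h =>
          (hx.support i T fun h0 => h (by simp [h0])).2
      _ = ENNReal.ofReal (d i) := by
          rw [← ENNReal.ofReal_sum_of_nonneg fun T _ => hx.nonneg i T, hx.demand i hi]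
  · simp only [Function.onFun, disjoint_iUnion₂_left, disjoint_iUnion₂_right]
    exact fun T hT T' hT' => hpiece T' (Finset.mem_filter.1 hT').1 T (Finset.mem_filter.1 hT).1
      i hi j hj fun h => hij (Prod.ext_iff.1 h).2

theorem HasDarbouxProperty.exists_pairwiseDisjoint_of_hall [MeasurableSpace α] {μ : Measure α}
    (hμ : HasDarbouxProperty μ) (hR : ∀ i ∈ 𝒞, MeasurableSet (R i))
    (hRfin : ∀ i ∈ 𝒞, μ (R i) ≠ ∞) (d : ι → ℝ≥0∞)
    (hall : ∀ S ⊆ 𝒞, ∑ i ∈ S, d i ≤ μ (⋃ i ∈ S, R i)) :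
    ∃ E : ι → Set α, (∀ i ∈ 𝒞, MeasurableSet (E i)) ∧ (∀ i ∈ 𝒞, E i ⊆ R i) ∧
      (∀ i ∈ 𝒞, μ (E i) = d i) ∧ (𝒞 : Set ι).PairwiseDisjoint E := by
  obtain ⟨x, hx⟩ := (hallCondition_vennCell hR hRfin hall).exists_isTransport
    (fun _ _ => measureReal_nonneg) (fun _ _ => ENNReal.toReal_nonneg)
  obtain ⟨E, hE, hER, hEμ, hdisj⟩ := hμ.exists_pairwiseDisjoint_of_isTransport hR hRfin hx
  refine ⟨E, hE, hER, fun i hi => ?_, hdisj⟩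
  have hdi : d i ≤ μ (R i) := by simpa using hall {i} (Finset.singleton_subset_iff.2 hi)
  rw [hEμ i hi, ENNReal.ofReal_toReal (ne_top_of_le_ne_top (hRfin i hi) hdi)]

end VennCell

section Carleson

variable {α ι : Type*} [MeasurableSpace α]

def IsSparse (μ : Measure α) (R : ι → Set α) (𝒞 : Finset ι) (η : ℝ≥0∞) : Prop :=
  ∃ E : ι → Set α, (∀ i ∈ 𝒞, MeasurableSet (E i)) ∧ (∀ i ∈ 𝒞, E i ⊆ R i) ∧
    (∀ i ∈ 𝒞, η * μ (R i) ≤ μ (E i)) ∧ (𝒞 : Set ι).PairwiseDisjoint E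

variable [TopologicalSpace α]

def IsCarleson (μ : Measure α) (R : ι → Set α) (𝒞 : Finset ι) (Λ : ℝ≥0∞) : Prop :=
  ∀ Ω : Set α, IsOpen Ω → 0 < μ Ω → μ Ω < ⊤ →
    ∑ i ∈ 𝒞, (if R i ⊆ Ω then μ (R i) else 0) ≤ Λ * μ Ω

variable {μ : Measure α} {R : ι → Set α} {𝒞 : Finset ι} {Λ : ℝ≥0∞}

lemma IsCarleson.sum_le_mul_measure_biUnion [μ.OuterRegular]
    (h : IsCarleson μ R 𝒞 Λ) (hΛ : Λ ≠ 0) (hΛ' : Λ ≠ ∞) {S : Finset ι} (hS : S ⊆ 𝒞) :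
    ∑ i ∈ S, μ (R i) ≤ Λ * μ (⋃ i ∈ S, R i) := by
  rw [Set.measure_eq_iInf_isOpen]
  simp_rw [ENNReal.mul_iInf_of_ne hΛ hΛ']
  refine le_iInf₂ fun Ω hΩ => le_iInf fun hΩo => ?_
  have hsub : ∀ i ∈ S, R i ⊆ Ω := fun i hi => (subset_biUnion_of_mem (u := R) hi).trans hΩ
  rcases eq_zero_or_pos (μ Ω) with h0 | hpos
  · simp [Finset.sum_eq_zero fun i hi => measure_mono_null (hsub i hi) h0]
  rcases eq_top_or_lt_top (μ Ω) with htop | hfin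
  · simp [htop, hΛ]
  calc ∑ i ∈ S, μ (R i) = ∑ i ∈ S, if R i ⊆ Ω then μ (R i) else 0 :=
        Finset.sum_congr rfl fun i hi => (if_pos (hsub i hi)).symm
    _ ≤ ∑ i ∈ 𝒞, if R i ⊆ Ω then μ (R i) else 0 := Finset.sum_le_sum_of_subset hS
    _ ≤ Λ * μ Ω := h Ω hΩo hpos hfin

lemma IsSparse.isCarleson (h : IsSparse μ R 𝒞 Λ⁻¹) (hΛ : Λ ≠ 0)
    (hΛ' : Λ ≠ ∞) : IsCarleson μ R 𝒞 Λ := by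
  obtain ⟨E, hE, hER, hEμ, hdisj⟩ := h
  intro Ω _ _ _
  set S := 𝒞.filter (R · ⊆ Ω)
  calc ∑ i ∈ 𝒞, (if R i ⊆ Ω then μ (R i) else 0) = ∑ i ∈ S, μ (R i) := (Finset.sum_filter _ _).symm
    _ ≤ ∑ i ∈ S, Λ * μ (E i) := Finset.sum_le_sum fun i hi => by
        calc μ (R i) = Λ * (Λ⁻¹ * μ (R i)) := by
              rw [← mul_assoc, ENNReal.mul_inv_cancel hΛ hΛ', one_mul]
          _ ≤ Λ * μ (E i) := mul_le_mul_right (hEμ i (Finset.mem_filter.1 hi).1) _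
    _ = Λ * μ (⋃ i ∈ S, E i) := by
        rw [measure_biUnion_finset (hdisj.subset fun i hi => (Finset.mem_filter.1 hi).1)
          fun i hi => hE i (Finset.mem_filter.1 hi).1, Finset.mul_sum]
    _ ≤ Λ * μ Ω := mul_le_mul_right (measure_mono (iUnion₂_subset fun i hi =>
        (hER i (Finset.mem_filter.1 hi).1).trans (Finset.mem_filter.1 hi).2)) _

theorem isCarleson_iff_isSparse [μ.OuterRegular] (hμ : HasDarbouxProperty μ)
    (hR : ∀ i ∈ 𝒞, MeasurableSet (R i)) (hRfin : ∀ i ∈ 𝒞, μ (R i) ≠ ∞) (hΛ : Λ ≠ 0)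
    (hΛ' : Λ ≠ ∞) : IsCarleson μ R 𝒞 Λ ↔ IsSparse μ R 𝒞 Λ⁻¹ := by
  refine ⟨fun h => ?_, fun h => h.isCarleson hΛ hΛ'⟩
  obtain ⟨E, hE, hER, hEμ, hdisj⟩ := hμ.exists_pairwiseDisjoint_of_hall hR hRfin
    (fun i => Λ⁻¹ * μ (R i)) fun S hS => by
      rw [← Finset.mul_sum]
      calc Λ⁻¹ * ∑ i ∈ S, μ (R i) ≤ Λ⁻¹ * (Λ * μ (⋃ i ∈ S, R i)) :=
            mul_le_mul_right (h.sum_le_mul_measure_biUnion hΛ hΛ' hS) _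
        _ = μ (⋃ i ∈ S, R i) := by rw [← mul_assoc, ENNReal.inv_mul_cancel hΛ hΛ', one_mul]
  exact ⟨E, hE, hER, fun i hi => (hEμ i hi).ge, hdisj⟩

end Carleson

/-- A finite family of axis-parallel rectangles is `Λ`-Carleson if and only if
it is `Λ⁻¹`-sparse. -/
theorem carleson_iff_sparse (Λ : ℝ) (hΛ : 0 < Λ) (𝒞 : Finset ((ℝ × ℝ) × (ℝ × ℝ))) :
    (∀ Ω : Set (ℝ × ℝ), IsOpen Ω → 0 < volume Ω → volume Ω < ⊤ →
        ∑ r ∈ 𝒞, (if rset r ⊆ Ω then volume (rset r) else 0) ≤ ENNReal.ofReal Λ * volume Ω) ↔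
      (∃ E : ((ℝ × ℝ) × (ℝ × ℝ)) → Set (ℝ × ℝ),
        (∀ r ∈ 𝒞, MeasurableSet (E r)) ∧ (∀ r ∈ 𝒞, E r ⊆ rset r) ∧
        (∀ r ∈ 𝒞, ENNReal.ofReal Λ⁻¹ * volume (rset r) ≤ volume (E r)) ∧
        (𝒞 : Set ((ℝ × ℝ) × (ℝ × ℝ))).PairwiseDisjoint E) := by
  rw [ENNReal.ofReal_inv_of_pos hΛ]
  exact isCarleson_iff_isSparse volume_hasDarbouxProperty
    (fun _ _ => measurableSet_Ico.prod measurableSet_Ico)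
    (fun _ _ => ((Metric.isBounded_Ico _ _).prod (Metric.isBounded_Ico _ _)).measure_lt_top.ne)
    (ENNReal.ofReal_pos.2 hΛ).ne' ENNReal.ofReal_ne_top
end
end

section
/- Let {Ω_i}_{i≥0} be a contracting family of measurable sets in ℝ², i.e., Ω_{i+1} ⊂ Ω_i and |Ω_{i+1}| ≤ (1/2)|Ω_i| for all i, with 0 < |Ω_0| < ∞. Then the maximal operator m(g)(z) = sup_{i : z ∈ Ω_i} ⟨|g|⟩_{Ω_i} is bounded on L^p(ℝ²) for every 1 < p ≤ ∞, with operator norm depending only on p. -/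
open MeasureTheory Set
open scoped ENNReal Classical

noncomputable section

/-!
Write `A_j = Ω_j \ Ω_{j+1}`. The halving condition makes `⋂ Ω_j` null, so up to a null set
`Ω_i` is the disjoint union of the `A_{i+k}`, `k ≥ 0`, and `|A_{i+k}| ≤ 2^{-k} |Ω_i|`.
Since `m(g)(z)^p ≤ ∑_{i : z ∈ Ω_i} ⟨|g|⟩_{Ω_i}^p`, it suffices to bound
`∑_i ⟨|g|⟩_{Ω_i}^p |Ω_i|`. Hölder on each `A_{i+k}` gives
`∫_{A_{i+k}} |g| ≤ b_{i+k}^{1/p} |Ω_i|^{1/q} r^k` with `b_j = ∫_{A_j} |g|^p` and `r = 2^{-1/q} < 1`,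
and Hölder for the weights `r^k` then gives `⟨|g|⟩_{Ω_i}^p |Ω_i| ≤ K^{p-1} ∑_k b_{i+k} r^k`,
`K = ∑_k r^k`. Summing over `i`, each `b_j` is counted with total weight at most `K`, whence
`‖m(g)‖_p ≤ K ‖g‖_p`. For `p = ∞` every average is at most `‖g‖_∞`.
-/

theorem lintegral_le_lintegral_rpow_mul_measure_univ {α : Type*} [MeasurableSpace α]
    (μ : Measure α) (f : α → ℝ≥0∞) {p q : ℝ} (hpq : p.HolderConjugate q) :
    ∫⁻ a, f a ∂μ ≤ (∫⁻ a, f a ^ p ∂μ) ^ (1 / p) * μ univ ^ (1 / q) := by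
  -- `f` need not be measurable: pass to a measurable minorant with the same integral
  obtain ⟨h, hm, hle, heq⟩ := exists_measurable_le_lintegral_eq μ f
  have holder := ENNReal.lintegral_mul_le_Lp_mul_Lq μ hpq hm.aemeasurable
    (aemeasurable_const (b := (1 : ℝ≥0∞)))
  simp only [Pi.mul_apply, mul_one, ENNReal.one_rpow, lintegral_const, one_mul] at holder
  rw [heq]
  refine holder.trans (mul_le_mul_left (ENNReal.rpow_le_rpow ?_ hpq.one_div_nonneg) _)
  exact lintegral_mono fun a => ENNReal.rpow_le_rpow (hle a) hpq.nonneg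

theorem tsum_mul_le_tsum_rpow_mul {ι : Type*} (f w : ι → ℝ≥0∞) {p q : ℝ}
    (hpq : p.HolderConjugate q) :
    ∑' k, f k * w k ≤ (∑' k, f k ^ p * w k) ^ (1 / p) * (∑' k, w k) ^ (1 / q) := by
  let _ : MeasurableSpace ι := ⊤
  have holder := lintegral_le_lintegral_rpow_mul_measure_univ (Measure.count.withDensity w) f hpq
  rw [withDensity_apply _ MeasurableSet.univ, Measure.restrict_univ,
    lintegral_withDensity_eq_lintegral_mul _ .of_discrete .of_discrete,
    lintegral_withDensity_eq_lintegral_mul _ .of_discrete .of_discrete,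
    lintegral_count, lintegral_count, lintegral_count] at holder
  simpa only [Pi.mul_apply, mul_comm] using holder

theorem ENNReal.ofReal_iSup_le {ι : Sort*} (x : ι → ℝ) :
    ENNReal.ofReal (⨆ i, x i) ≤ ⨆ i, ENNReal.ofReal (x i) := by
  rcases isEmpty_or_nonempty ι with hι | hι
  · simp
  by_cases hx : BddAbove (range x)
  · exact (Monotone.map_ciSup_of_continuousAt ENNReal.continuous_ofReal.continuousAt
      ENNReal.ofReal_mono hx).le
  · simp [Real.iSup_of_not_bddAbove hx]

theorem ENNReal.iSup_rpow_le_tsum {ι : Type*} (x : ι → ℝ≥0∞) {p : ℝ} (hp : 0 < p) :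
    (⨆ i, x i) ^ p ≤ ∑' i, x i ^ p := by
  rw [← ENNReal.orderIsoRpow_apply p hp, OrderIso.map_iSup]
  exact iSup_le fun i => ENNReal.le_tsum i

theorem ENNReal.le_mul_inv_two_pow_of_le_half {v : ℕ → ℝ≥0∞} (hv : ∀ i, v (i + 1) ≤ v i / 2)
    (i k : ℕ) :
    v (i + k) ≤ v i * 2⁻¹ ^ k := by
  induction k with
  | zero => simp
  | succ k ih =>
    calc v (i + (k + 1)) ≤ v (i + k) / 2 := hv _
      _ ≤ v i * 2⁻¹ ^ k / 2 := by gcongr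
      _ = v i * 2⁻¹ ^ (k + 1) := by rw [div_eq_mul_inv, pow_succ, mul_assoc]

theorem ENNReal.inv_mul_rpow_one_div_mul_rpow_mul_self {v : ℝ≥0∞} (hv0 : v ≠ 0)
    (hvtop : v ≠ ∞) {p q : ℝ} (hpq : p.HolderConjugate q) (Y : ℝ≥0∞) :
    (v⁻¹ * (v ^ (1 / q) * Y)) ^ p * v = Y ^ p := by
  have hvp0 : v ^ p ≠ 0 := by simp [ENNReal.rpow_eq_zero_iff, hv0, hvtop]
  have hvptop : v ^ p ≠ ∞ := by simp [ENNReal.rpow_eq_top_iff, hv0, hvtop]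
  rw [← mul_assoc, ENNReal.mul_rpow_of_nonneg _ _ hpq.nonneg,
    ENNReal.mul_rpow_of_nonneg _ _ hpq.nonneg, ENNReal.inv_rpow, ← ENNReal.rpow_mul,
    one_div_mul_eq_div, hpq.div_conj_eq_sub_one, ENNReal.rpow_sub _ _ hv0 hvtop,
    ENNReal.rpow_one, div_eq_mul_inv]
  calc (v ^ p)⁻¹ * (v ^ p * v⁻¹) * Y ^ p * v = ((v ^ p)⁻¹ * v ^ p) * (v⁻¹ * v) * Y ^ p := by ring
    _ = Y ^ p := by rw [ENNReal.inv_mul_cancel hvp0 hvptop, ENNReal.inv_mul_cancel hv0 hvtop,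
      one_mul, one_mul]

theorem ofReal_inv_mul_setIntegral_abs_le {α : Type*} [MeasurableSpace α]
    (μ : Measure α) (s : Set α) (g : α → ℝ) :
    ENNReal.ofReal ((μ s).toReal⁻¹ * ∫ w in s, |g w| ∂μ) ≤
      (μ s)⁻¹ * ∫⁻ w in s, ‖g w‖ₑ ∂μ := by
  rw [ENNReal.ofReal_mul (inv_nonneg.2 ENNReal.toReal_nonneg), ← ENNReal.toReal_inv]
  refine mul_le_mul' ENNReal.ofReal_toReal_le ?_
  calc ENNReal.ofReal (∫ w in s, |g w| ∂μ) = ‖∫ w in s, |g w| ∂μ‖ₑ :=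
        (Real.enorm_of_nonneg (integral_nonneg fun w => abs_nonneg _)).symm
    _ ≤ ∫⁻ w in s, ‖|g w|‖ₑ ∂μ := enorm_integral_le_lintegral_enorm _
    _ = ∫⁻ w in s, ‖g w‖ₑ ∂μ := by simp

theorem Antitone.sdiff_iInter_subset_iUnion_sdiff_succ {α : Type*} {Ω : ℕ → Set α}
    (hΩ : Antitone Ω) (i : ℕ) : Ω i \ ⋂ n, Ω n ⊆ ⋃ k, Ω (i + k) \ Ω (i + k + 1) := by
  rintro z ⟨hz, hz'⟩
  have hex : ∃ k, z ∉ Ω (i + k) := by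
    obtain ⟨n, hn⟩ : ∃ n, z ∉ Ω n := by simpa using hz'
    exact ⟨n, fun h => hn (hΩ (Nat.le_add_left n i) h)⟩
  have hk : Nat.find hex ≠ 0 := fun h => Nat.find_spec hex (by simpa [h] using hz)
  refine mem_iUnion.mpr ⟨Nat.find hex - 1, not_not.mp (Nat.find_min hex (by omega)), ?_⟩
  simpa [Nat.add_assoc, Nat.sub_add_cancel (Nat.one_le_iff_ne_zero.mpr hk)] using
    Nat.find_spec hex

theorem Antitone.pairwise_disjoint_sdiff_succ {α : Type*} {Ω : ℕ → Set α} (hΩ : Antitone Ω) :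
    Pairwise (Function.onFun Disjoint fun j => Ω j \ Ω (j + 1)) := by
  refine (pairwise_disjoint_on _).mpr fun j j' hjj' => disjoint_left.mpr ?_
  exact fun z hz hz' => hz.2 (hΩ hjj' hz'.1)

/-- `∑ₖ rᵏ` for `r = 2^(-1/q)`: by halving, the Hölder factor `|Ω_{i+k}|^(1/q)` is at most
`|Ω_i|^(1/q) rᵏ`. -/
def halvingConst (q : ℝ) : ℝ≥0∞ := ∑' k : ℕ, ((2⁻¹ : ℝ≥0∞) ^ (1 / q)) ^ k

theorem halvingConst_ne_top {q : ℝ} (hq : 0 < q) : halvingConst q ≠ ∞ := by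
  have hr : (2⁻¹ : ℝ≥0∞) ^ (1 / q) < 1 := ENNReal.rpow_lt_one (by norm_num) (by positivity)
  rw [halvingConst, ENNReal.tsum_geometric, Ne, ENNReal.inv_eq_top, tsub_eq_zero_iff_le]
  exact hr.not_ge

theorem one_le_halvingConst (q : ℝ) : 1 ≤ halvingConst q := by
  calc 1 = ((2⁻¹ : ℝ≥0∞) ^ (1 / q)) ^ 0 := (pow_zero _).symm
    _ ≤ halvingConst q := ENNReal.le_tsum 0

section NestedSets

variable {α : Type*} [MeasurableSpace α] {μ : Measure α} {Ω : ℕ → Set α}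

theorem measure_iInter_eq_zero_of_le_half (hhalf : ∀ i, μ (Ω (i + 1)) ≤ μ (Ω i) / 2)
    (hfin : μ (Ω 0) ≠ ∞) : μ (⋂ n, Ω n) = 0 := by
  have hdecay : Filter.Tendsto (fun n : ℕ => μ (Ω 0) * 2⁻¹ ^ n) Filter.atTop (nhds 0) := by
    simpa using ENNReal.Tendsto.const_mul
      (ENNReal.tendsto_pow_atTop_nhds_zero_of_lt_one (by norm_num)) (Or.inr hfin)
  refine le_antisymm (ge_of_tendsto' hdecay fun n => ?_) zero_le
  calc μ (⋂ n, Ω n) ≤ μ (Ω (0 + n)) := measure_mono (iInter_subset _ _)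
    _ ≤ μ (Ω 0) * 2⁻¹ ^ n := ENNReal.le_mul_inv_two_pow_of_le_half hhalf 0 n

theorem setLIntegral_le_tsum_sdiff_succ (hΩ : Antitone Ω) (hnull : μ (⋂ n, Ω n) = 0)
    (f : α → ℝ≥0∞) (i : ℕ) :
    ∫⁻ z in Ω i, f z ∂μ ≤ ∑' k, ∫⁻ z in Ω (i + k) \ Ω (i + k + 1), f z ∂μ :=
  calc ∫⁻ z in Ω i, f z ∂μ = ∫⁻ z in Ω i \ ⋂ n, Ω n, f z ∂μ :=
        setLIntegral_congr (sdiff_null_ae_eq_self hnull).symm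
    _ ≤ ∫⁻ z in ⋃ k, Ω (i + k) \ Ω (i + k + 1), f z ∂μ :=
        lintegral_mono_set (hΩ.sdiff_iInter_subset_iUnion_sdiff_succ i)
    _ ≤ _ := lintegral_iUnion_le _ _

theorem tsum_setLIntegral_sdiff_succ_le (hmeas : ∀ i, MeasurableSet (Ω i)) (hΩ : Antitone Ω)
    (f : α → ℝ≥0∞) : ∑' j, ∫⁻ z in Ω j \ Ω (j + 1), f z ∂μ ≤ ∫⁻ z, f z ∂μ := by
  rw [← lintegral_iUnion (fun j => (hmeas j).diff (hmeas (j + 1)))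
    hΩ.pairwise_disjoint_sdiff_succ]
  exact setLIntegral_le_lintegral _ _

theorem setLIntegral_le_rpow_measure_mul_tsum (hΩ : Antitone Ω)
    (hhalf : ∀ i, μ (Ω (i + 1)) ≤ μ (Ω i) / 2) (hfin : μ (Ω 0) ≠ ∞) {p q : ℝ}
    (hpq : p.HolderConjugate q) (f : α → ℝ≥0∞) (i : ℕ) :
    ∫⁻ z in Ω i, f z ∂μ ≤ μ (Ω i) ^ (1 / q) *
      ∑' k, (∫⁻ z in Ω (i + k) \ Ω (i + k + 1), f z ^ p ∂μ) ^ (1 / p) *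
        ((2⁻¹ : ℝ≥0∞) ^ (1 / q)) ^ k := by
  refine (setLIntegral_le_tsum_sdiff_succ hΩ
    (measure_iInter_eq_zero_of_le_half hhalf hfin) f i).trans ?_
  rw [← ENNReal.tsum_mul_left]
  refine ENNReal.tsum_le_tsum fun k => ?_
  set A := Ω (i + k) \ Ω (i + k + 1)
  calc ∫⁻ z in A, f z ∂μ ≤ (∫⁻ z in A, f z ^ p ∂μ) ^ (1 / p) * μ A ^ (1 / q) := by
        simpa using lintegral_le_lintegral_rpow_mul_measure_univ (μ.restrict A) f hpq
    _ ≤ (∫⁻ z in A, f z ^ p ∂μ) ^ (1 / p) * (μ (Ω i) * 2⁻¹ ^ k) ^ (1 / q) := by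
        refine mul_le_mul_right (ENNReal.rpow_le_rpow ?_ hpq.symm.one_div_nonneg) _
        exact (measure_mono sdiff_subset).trans
          (ENNReal.le_mul_inv_two_pow_of_le_half hhalf i k)
    _ = _ := by
        rw [ENNReal.mul_rpow_of_nonneg _ _ hpq.symm.one_div_nonneg, ← ENNReal.rpow_natCast_mul,
          mul_comm (k : ℝ), ENNReal.rpow_mul_natCast]
        ring

theorem rpow_setLAverage_mul_measure_le (hΩ : Antitone Ω)
    (hhalf : ∀ i, μ (Ω (i + 1)) ≤ μ (Ω i) / 2) (hfin : μ (Ω 0) ≠ ∞) {p q : ℝ}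
    (hpq : p.HolderConjugate q) (f : α → ℝ≥0∞) (i : ℕ) :
    ((μ (Ω i))⁻¹ * ∫⁻ z in Ω i, f z ∂μ) ^ p * μ (Ω i) ≤ halvingConst q ^ (p / q) *
      ∑' k, (∫⁻ z in Ω (i + k) \ Ω (i + k + 1), f z ^ p ∂μ) * ((2⁻¹ : ℝ≥0∞) ^ (1 / q)) ^ k := by
  set r : ℝ≥0∞ := (2⁻¹ : ℝ≥0∞) ^ (1 / q)
  set b := fun k => ∫⁻ z in Ω (i + k) \ Ω (i + k + 1), f z ^ p ∂μ
  rcases eq_or_ne (μ (Ω i)) 0 with hv0 | hv0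
  · simp [hv0]
  have hvtop : μ (Ω i) ≠ ∞ := ne_top_of_le_ne_top hfin (measure_mono (hΩ (Nat.zero_le i)))
  have hsum : ∑' k, b k ^ (1 / p) * r ^ k ≤
      (∑' k, b k * r ^ k) ^ (1 / p) * halvingConst q ^ (1 / q) := by
    have holder := tsum_mul_le_tsum_rpow_mul (fun k => b k ^ (1 / p)) (fun k => r ^ k) hpq
    simp only [← ENNReal.rpow_mul, one_div_mul_cancel hpq.ne_zero, ENNReal.rpow_one] at holder
    exact holder
  calc ((μ (Ω i))⁻¹ * ∫⁻ z in Ω i, f z ∂μ) ^ p * μ (Ω i)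
      ≤ ((μ (Ω i))⁻¹ * (μ (Ω i) ^ (1 / q) *
          ((∑' k, b k * r ^ k) ^ (1 / p) * halvingConst q ^ (1 / q)))) ^ p * μ (Ω i) := by
        refine mul_le_mul_left (ENNReal.rpow_le_rpow (mul_le_mul_right ?_ _) hpq.nonneg) _
        exact (setLIntegral_le_rpow_measure_mul_tsum hΩ hhalf hfin hpq f i).trans
          (mul_le_mul_right hsum _)
    _ = ((∑' k, b k * r ^ k) ^ (1 / p) * halvingConst q ^ (1 / q)) ^ p :=
        ENNReal.inv_mul_rpow_one_div_mul_rpow_mul_self hv0 hvtop hpq _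
    _ = halvingConst q ^ (p / q) * ∑' k, b k * r ^ k := by
        rw [ENNReal.mul_rpow_of_nonneg _ _ hpq.nonneg, ← ENNReal.rpow_mul, ← ENNReal.rpow_mul,
          one_div_mul_cancel hpq.ne_zero, one_div_mul_eq_div, ENNReal.rpow_one, mul_comm]

theorem tsum_rpow_setLAverage_mul_measure_le (hmeas : ∀ i, MeasurableSet (Ω i))
    (hΩ : Antitone Ω) (hhalf : ∀ i, μ (Ω (i + 1)) ≤ μ (Ω i) / 2) (hfin : μ (Ω 0) ≠ ∞)
    {p q : ℝ} (hpq : p.HolderConjugate q) (f : α → ℝ≥0∞) :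
    ∑' i, ((μ (Ω i))⁻¹ * ∫⁻ z in Ω i, f z ∂μ) ^ p * μ (Ω i) ≤
      halvingConst q ^ p * ∫⁻ z, f z ^ p ∂μ := by
  set K := halvingConst q
  set r : ℝ≥0∞ := (2⁻¹ : ℝ≥0∞) ^ (1 / q)
  set b := fun j => ∫⁻ z in Ω j \ Ω (j + 1), f z ^ p ∂μ
  have hshift : ∀ k, ∑' i, b (i + k) ≤ ∫⁻ z, f z ^ p ∂μ := fun k =>
    (ENNReal.tsum_comp_le_tsum_of_injective (add_left_injective k) b).trans
      (tsum_setLIntegral_sdiff_succ_le hmeas hΩ _)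
  have hK : K ^ (p / q) * K = K ^ p := by
    have hK0 : K ≠ 0 := (zero_lt_one.trans_le (one_le_halvingConst q)).ne'
    rw [hpq.div_conj_eq_sub_one, ENNReal.rpow_sub _ _ hK0 (halvingConst_ne_top hpq.symm.pos),
      ENNReal.rpow_one, ENNReal.div_mul_cancel hK0 (halvingConst_ne_top hpq.symm.pos)]
  calc ∑' i, ((μ (Ω i))⁻¹ * ∫⁻ z in Ω i, f z ∂μ) ^ p * μ (Ω i)
      ≤ ∑' i, K ^ (p / q) * ∑' k, b (i + k) * r ^ k :=
        ENNReal.tsum_le_tsum fun i => rpow_setLAverage_mul_measure_le hΩ hhalf hfin hpq f i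
    _ = K ^ (p / q) * ∑' k, (∑' i, b (i + k)) * r ^ k := by
        rw [ENNReal.tsum_mul_left, ENNReal.tsum_comm]
        simp only [ENNReal.tsum_mul_right]
    _ ≤ K ^ (p / q) * ∑' k, (∫⁻ z, f z ^ p ∂μ) * r ^ k := by
        gcongr with k
        exact hshift k
    _ = K ^ p * ∫⁻ z, f z ^ p ∂μ := by
        rw [ENNReal.tsum_mul_left, show ∑' k : ℕ, r ^ k = K from rfl, ← hK]
        ring

def contractingMaximal (μ : Measure α) (Ω : ℕ → Set α) (g : α → ℝ) (z : α) : ℝ :=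
  ⨆ i : {i : ℕ // z ∈ Ω i}, (μ (Ω i.1)).toReal⁻¹ * ∫ w in Ω i.1, |g w| ∂μ

theorem enorm_contractingMaximal_le (g : α → ℝ) (z : α) :
    ‖contractingMaximal μ Ω g z‖ₑ ≤
      ⨆ i : {i : ℕ // z ∈ Ω i}, (μ (Ω i))⁻¹ * ∫⁻ w in Ω i, ‖g w‖ₑ ∂μ := by
  have hnonneg : 0 ≤ contractingMaximal μ Ω g z := Real.iSup_nonneg fun i =>
    mul_nonneg (inv_nonneg.2 ENNReal.toReal_nonneg) (integral_nonneg fun w => abs_nonneg _)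
  rw [Real.enorm_of_nonneg hnonneg]
  exact (ENNReal.ofReal_iSup_le _).trans
    (iSup_mono fun i => ofReal_inv_mul_setIntegral_abs_le μ _ g)

theorem eLpNorm_top_contractingMaximal_le (g : α → ℝ) :
    eLpNorm (contractingMaximal μ Ω g) ∞ μ ≤ eLpNorm g ∞ μ := by
  rw [eLpNorm_exponent_top, eLpNorm_exponent_top]
  set M := eLpNormEssSup g μ
  refine eLpNormEssSup_le_of_ae_enorm_bound (ae_of_all _ fun z =>
    (enorm_contractingMaximal_le g z).trans (iSup_le fun i => ?_))
  calc (μ (Ω i))⁻¹ * ∫⁻ w in Ω i, ‖g w‖ₑ ∂μ ≤ (μ (Ω i))⁻¹ * (M * μ (Ω i)) := by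
        gcongr
        exact (lintegral_mono_ae (ae_restrict_of_ae (enorm_ae_le_eLpNormEssSup g μ))).trans
          (setLIntegral_const _ _).le
    _ = M * ((μ (Ω i))⁻¹ * μ (Ω i)) := by ring
    _ ≤ M := mul_le_of_le_one_right' (ENNReal.inv_mul_le_one _)

theorem rpow_enorm_contractingMaximal_le_tsum_indicator {P : ℝ} (hP : 0 < P) (g : α → ℝ)
    (z : α) : ‖contractingMaximal μ Ω g z‖ₑ ^ P ≤
      ∑' i, (Ω i).indicator (fun _ => ((μ (Ω i))⁻¹ * ∫⁻ w in Ω i, ‖g w‖ₑ ∂μ) ^ P) z := by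
  set A := fun i => (μ (Ω i))⁻¹ * ∫⁻ w in Ω i, ‖g w‖ₑ ∂μ
  calc ‖contractingMaximal μ Ω g z‖ₑ ^ P ≤ (⨆ i : {i : ℕ // z ∈ Ω i}, A i) ^ P :=
        ENNReal.rpow_le_rpow (enorm_contractingMaximal_le g z) hP.le
    _ ≤ ∑' i : {i : ℕ // z ∈ Ω i}, A i ^ P := ENNReal.iSup_rpow_le_tsum _ hP
    _ = ∑' i, (Ω i).indicator (fun _ => A i ^ P) z :=
        (tsum_subtype {i | z ∈ Ω i} fun i => A i ^ P).trans
          (tsum_congr fun i => by simp [indicator_apply])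

theorem lintegral_rpow_enorm_contractingMaximal_le (hmeas : ∀ i, MeasurableSet (Ω i))
    (hΩ : Antitone Ω) (hhalf : ∀ i, μ (Ω (i + 1)) ≤ μ (Ω i) / 2) (hfin : μ (Ω 0) ≠ ∞)
    {p q : ℝ} (hpq : p.HolderConjugate q) (g : α → ℝ) :
    ∫⁻ z, ‖contractingMaximal μ Ω g z‖ₑ ^ p ∂μ ≤ halvingConst q ^ p * ∫⁻ z, ‖g z‖ₑ ^ p ∂μ :=
  calc ∫⁻ z, ‖contractingMaximal μ Ω g z‖ₑ ^ p ∂μ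
      ≤ ∫⁻ z, ∑' i, (Ω i).indicator
          (fun _ => ((μ (Ω i))⁻¹ * ∫⁻ w in Ω i, ‖g w‖ₑ ∂μ) ^ p) z ∂μ :=
        lintegral_mono (rpow_enorm_contractingMaximal_le_tsum_indicator hpq.pos g)
    _ = ∑' i, ((μ (Ω i))⁻¹ * ∫⁻ w in Ω i, ‖g w‖ₑ ∂μ) ^ p * μ (Ω i) := by
        rw [lintegral_tsum fun i => (measurable_const.indicator (hmeas i)).aemeasurable]
        exact tsum_congr fun i => lintegral_indicator_const (hmeas i) _
    _ ≤ _ := tsum_rpow_setLAverage_mul_measure_le hmeas hΩ hhalf hfin hpq _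

theorem eLpNorm_contractingMaximal_le (hmeas : ∀ i, MeasurableSet (Ω i)) (hΩ : Antitone Ω)
    (hhalf : ∀ i, μ (Ω (i + 1)) ≤ μ (Ω i) / 2) (hfin : μ (Ω 0) ≠ ∞) {p : ℝ≥0∞} (hp : 1 < p)
    (hp_top : p ≠ ∞) (g : α → ℝ) :
    eLpNorm (contractingMaximal μ Ω g) p μ ≤
      halvingConst p.toReal.conjExponent * eLpNorm g p μ := by
  set P := p.toReal
  have hP : P.HolderConjugate P.conjExponent := .conjExponent <| by
    simpa using (ENNReal.toReal_lt_toReal ENNReal.one_ne_top hp_top).2 hp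
  have hp0 : p ≠ 0 := (zero_lt_one.trans hp).ne'
  rw [eLpNorm_eq_lintegral_rpow_enorm_toReal hp0 hp_top,
    eLpNorm_eq_lintegral_rpow_enorm_toReal hp0 hp_top]
  calc (∫⁻ z, ‖contractingMaximal μ Ω g z‖ₑ ^ P ∂μ) ^ (1 / P)
      ≤ (halvingConst P.conjExponent ^ P * ∫⁻ z, ‖g z‖ₑ ^ P ∂μ) ^ (1 / P) :=
        ENNReal.rpow_le_rpow (lintegral_rpow_enorm_contractingMaximal_le hmeas hΩ hhalf hfin hP g)
          hP.one_div_nonneg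
    _ = halvingConst P.conjExponent * (∫⁻ z, ‖g z‖ₑ ^ P ∂μ) ^ (1 / P) := by
        rw [ENNReal.mul_rpow_of_nonneg _ _ hP.one_div_nonneg, ← ENNReal.rpow_mul,
          mul_one_div_cancel hP.ne_zero, ENNReal.rpow_one]

end NestedSets

/-- The maximal operator associated with a contracting family of measurable
sets is bounded on `L^p(ℝ²)` for `1 < p ≤ ∞`, with norm depending only on `p`. -/
theorem contracting_maximal_bounded (p : ℝ≥0∞) (hp : 1 < p) :
    ∃ C : ℝ, 0 < C ∧
      ∀ Ω : ℕ → Set (ℝ × ℝ),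
        (∀ i, MeasurableSet (Ω i)) →
        (∀ i, Ω (i + 1) ⊆ Ω i) →
        (∀ i, volume (Ω (i + 1)) ≤ volume (Ω i) / 2) →
        0 < volume (Ω 0) → volume (Ω 0) < ⊤ →
        ∀ g : ℝ × ℝ → ℝ,
          eLpNorm (fun z => ⨆ i : {i : ℕ // z ∈ Ω i},
              (volume (Ω i.1)).toReal⁻¹ * ∫ w in Ω i.1, |g w|) p volume ≤
            ENNReal.ofReal C * eLpNorm g p volume := by
  rcases eq_or_ne p ∞ with rfl | hp_top
  · refine ⟨1, one_pos, fun Ω _ _ _ _ _ g => ?_⟩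
    rw [ENNReal.ofReal_one, one_mul]
    exact eLpNorm_top_contractingMaximal_le g
  have hq : 0 < p.toReal.conjExponent := (Real.HolderConjugate.conjExponent <| by
    simpa using (ENNReal.toReal_lt_toReal ENNReal.one_ne_top hp_top).2 hp).symm.pos
  have hK := halvingConst_ne_top hq
  refine ⟨(halvingConst p.toReal.conjExponent).toReal,
    ENNReal.toReal_pos (zero_lt_one.trans_le (one_le_halvingConst _)).ne' hK,
    fun Ω hmeas hsub hhalf _ hfin g => ?_⟩
  rw [ENNReal.ofReal_toReal hK]
  exact eLpNorm_contractingMaximal_le hmeas (antitone_nat_of_succ_le hsub) hhalf hfin.ne hp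
    hp_top g

end
end
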